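/- arXiv:1902.03369 — 7 statements merged into one kernel-verified Lean document; each statement's English description precedes it below -/
import Mathlib

section
/- Consider N+1 binary random variables X_1,…,X_{N+1} ∈ {0,1} with an arbitrary joint distribution, and an index T ∈ {1,…,N+1} chosen uniformly at random, independently of (X_1,…,X_{N+1}). Say the test passes if X_j = 0 for all j ≠ T, and let X' := X_T be the remaining variable. If β ≥ 1/(N+1) and Pr[test passes] ≥ β, then the conditional probability satisfies Pr[X' = 1 | test passes] ≤ (1−β)/(βN). -/
open scoped BigOperators ComplexOrder

/-- Proposition 2 of the paper (classical random sampling test). Consider `N+1` binary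
random variables `X_1, …, X_{N+1}` with an arbitrary joint distribution `q` on
`{0,1}^{N+1}`, and an index `T` uniform on `{1, …, N+1}` independent of the `X`'s (so joint
probabilities are `q x / (N+1)`).  The test passes when `X_j = 0` for all `j ≠ T`, and
`X' := X_T`.  If `β ≥ 1/(N+1)` and `Pr[pass] ≥ β`, then
`Pr[X' = 1 ∧ pass] ≤ ((1-β)/(βN)) · Pr[pass]`, i.e. `Pr[X' = 1 | pass] ≤ (1-β)/(βN)`. -/
theorem classical_random_sampling_test (N : ℕ) (hN : 1 ≤ N)
    (q : (Fin (N + 1) → Fin 2) → ℝ) (hq0 : ∀ x, 0 ≤ q x) (hq1 : ∑ x, q x = 1)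
    (β : ℝ) (hβ0 : 0 < β) (hβ1 : β ≤ 1) (hβN : 1 / ((N : ℝ) + 1) ≤ β)
    (hpass : β ≤ ((N : ℝ) + 1)⁻¹ *
      ∑ t : Fin (N + 1), ∑ x, (if ∀ j ≠ t, x j = 0 then q x else 0)) :
    ((N : ℝ) + 1)⁻¹ *
        ∑ t : Fin (N + 1), ∑ x, (if (∀ j ≠ t, x j = 0) ∧ x t = 1 then q x else 0) ≤
      (1 - β) / (β * N) *
        (((N : ℝ) + 1)⁻¹ *
          ∑ t : Fin (N + 1), ∑ x, (if ∀ j ≠ t, x j = 0 then q x else 0)) := by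
  classical
  set z : Fin (N + 1) → Fin 2 := fun _ => 0 with hz
  set e : Fin (N + 1) → (Fin (N + 1) → Fin 2) := fun t j => if j = t then 1 else 0 with he
  have hzet : ∀ t, z ≠ e t := by
    intro t h
    have := congrFun h t
    simp [hz, he] at this
  have hfin2 : ∀ (a : Fin 2), a = 0 ∨ a = 1 := by decide
  -- characterization of the pass set
  have hAset : ∀ t : Fin (N+1),
      (Finset.univ.filter (fun x : Fin (N+1) → Fin 2 => ∀ j ≠ t, x j = 0)) = {z, e t} := by
    intro t
    ext x
    simp only [Finset.mem_filter, Finset.mem_univ, true_and, Finset.mem_insert,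
      Finset.mem_singleton]
    constructor
    · intro hx
      rcases hfin2 (x t) with h0 | h1
      · left; funext j
        by_cases hj : j = t
        · subst hj; exact h0
        · exact hx j hj
      · right; funext j
        by_cases hj : j = t
        · subst hj; simp [he, h1]
        · simp [he, hj, hx j hj]
    · rintro (rfl | rfl)
      · intro j _; rfl
      · intro j hj; simp [he, hj]
  have hA : ∀ t : Fin (N+1),
      (∑ x, (if ∀ j ≠ t, x j = 0 then q x else 0)) = q z + q (e t) := by
    intro t
    rw [← Finset.sum_filter, hAset t, Finset.sum_pair (hzet t)]
  have hBset : ∀ t : Fin (N+1),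
      (Finset.univ.filter (fun x : Fin (N+1) → Fin 2 => (∀ j ≠ t, x j = 0) ∧ x t = 1))
        = {e t} := by
    intro t
    ext x
    simp only [Finset.mem_filter, Finset.mem_univ, true_and, Finset.mem_singleton]
    constructor
    · rintro ⟨hx, ht⟩
      funext j
      by_cases hj : j = t
      · subst hj; simp [he, ht]
      · simp [he, hj, hx j hj]
    · rintro rfl
      refine ⟨fun j hj => by simp [he, hj], by simp [he]⟩
  have hB : ∀ t : Fin (N+1),
      (∑ x, (if (∀ j ≠ t, x j = 0) ∧ x t = 1 then q x else 0)) = q (e t) := by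
    intro t
    rw [← Finset.sum_filter, hBset t, Finset.sum_singleton]
  -- injectivity of e, and the key mass bound
  have hinj : Function.Injective e := by
    intro t t' h
    have := congrFun h t
    simp [he] at this
    by_contra hne
    simp [hne] at this
  have hznot : z ∉ Finset.univ.image e := by
    simp only [Finset.mem_image, Finset.mem_univ, true_and]
    rintro ⟨t, ht⟩
    exact hzet t ht.symm
  have hmass : q z + ∑ t : Fin (N+1), q (e t) ≤ 1 := by
    have hsub : insert z (Finset.univ.image e) ⊆ (Finset.univ : Finset (Fin (N+1) → Fin 2)) :=
      Finset.subset_univ _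
    have hle : ∑ x ∈ insert z (Finset.univ.image e), q x ≤ ∑ x, q x :=
      Finset.sum_le_sum_of_subset_of_nonneg hsub (fun x _ _ => hq0 x)
    rw [Finset.sum_insert hznot,
      Finset.sum_image (fun a _ b _ h => hinj h)] at hle
    linarith [hq1 ▸ hle]
  -- rewrite both sides
  have hsumA : ∑ t : Fin (N + 1), ∑ x, (if ∀ j ≠ t, x j = 0 then q x else 0)
      = ((N : ℝ) + 1) * q z + ∑ t : Fin (N+1), q (e t) := by
    simp only [hA]
    rw [Finset.sum_add_distrib, Finset.sum_const, Finset.card_univ, Fintype.card_fin]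
    push_cast
    ring
  have hsumB : ∑ t : Fin (N + 1), ∑ x, (if (∀ j ≠ t, x j = 0) ∧ x t = 1 then q x else 0)
      = ∑ t : Fin (N+1), q (e t) := by
    simp only [hB]
  rw [hsumA, hsumB]
  rw [hsumA] at hpass
  set s : ℝ := ∑ t : Fin (N+1), q (e t) with hs
  have hs0 : 0 ≤ s := Finset.sum_nonneg fun t _ => hq0 _
  have ha0 : 0 ≤ q z := hq0 z
  have hn1 : (1 : ℝ) ≤ (N : ℝ) := by exact_mod_cast hN
  have hn0 : (0 : ℝ) < (N : ℝ) + 1 := by linarith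
  have hP : ((N : ℝ) + 1)⁻¹ * ((N : ℝ) + 1) = 1 := inv_mul_cancel₀ (ne_of_gt hn0)
  have hpass' : β * ((N : ℝ) + 1) ≤ ((N : ℝ) + 1) * q z + s := by
    have h := mul_le_mul_of_nonneg_right hpass hn0.le
    have h2 : ((N : ℝ) + 1)⁻¹ * (((N : ℝ) + 1) * q z + s) * ((N : ℝ) + 1)
        = ((N : ℝ) + 1) * q z + s := by field_simp
    linarith [h, h2.symm ▸ h]
  have h1 : (N : ℝ) * s ≤ (1 - β) * ((N : ℝ) + 1) := by nlinarith
  have key : s * (β * (N : ℝ)) ≤ (1 - β) * (((N : ℝ) + 1) * q z + s) := by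
    nlinarith [mul_le_mul_of_nonneg_left h1 hβ0.le,
      mul_le_mul_of_nonneg_left hpass' (by linarith : (0:ℝ) ≤ 1 - β)]
  have hβn : (0 : ℝ) < β * (N : ℝ) := by positivity
  rw [div_mul_eq_mul_div, le_div_iff₀ hβn]
  have hiN : (0 : ℝ) ≤ ((N : ℝ) + 1)⁻¹ := by positivity
  calc ((N : ℝ) + 1)⁻¹ * s * (β * (N : ℝ))
      = ((N : ℝ) + 1)⁻¹ * (s * (β * (N : ℝ))) := by ring
    _ ≤ ((N : ℝ) + 1)⁻¹ * ((1 - β) * (((N : ℝ) + 1) * q z + s)) :=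
        mul_le_mul_of_nonneg_left key hiN
    _ = (1 - β) * (((N : ℝ) + 1)⁻¹ * (((N : ℝ) + 1) * q z + s)) := by ring
end

section
/- Let Ω be an operator on (ℂ²)^{⊗n} with |G⟩⟨G| ≤ Ω ≤ I and spectral gap ν := ν(Ω) > 0, and let N ≥ 1 and β ≥ 1/(Nν+1). For every state ρ on ((ℂ²)^{⊗n})^{⊗(N+1)} such that the acceptance probability p of the N-random sampling test of Ω satisfies p ≥ β, the conditional state σ of the remaining copy satisfies ⟨G|σ|G⟩ ≥ 1 − (1−β)/(Nβν). -/
open scoped BigOperators ComplexOrder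
open Matrix Complex

noncomputable section

/-- Computational-basis index set of `(ℂ²)^{⊗n}`. -/
abbrev QIdx (n : ℕ) := Fin n → Fin 2

/-- Linear operators on `(ℂ²)^{⊗n}`, represented as matrices. -/
abbrev QOp (n : ℕ) := Matrix (QIdx n) (QIdx n) ℂ

/-- A bit viewed as a real number. -/
def bR (b : Fin 2) : ℝ := (b : ℕ)

/-- The ℓ²→ℓ² operator norm of a matrix. -/
noncomputable def opNorm {ι : Type*} [Fintype ι] [DecidableEq ι] (M : Matrix ι ι ℂ) : ℝ :=
  ‖Matrix.toEuclideanCLM (𝕜 := ℂ) M‖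

/-- The weighted graph state `|G⟩`, as amplitudes
`⟨z|G⟩ = 2^{-n/2} ∏_{j<k} e^{i θ_{jk} z_j z_k}` (for symmetric `θ`,
`∑_{j<k} = (1/2) ∑_{j,k}`). -/
noncomputable def gVec (n : ℕ) (θ : Fin n → Fin n → ℝ) : QIdx n → ℂ :=
  fun z => ((Real.sqrt (2 ^ n))⁻¹ : ℝ) *
    Complex.exp (Complex.I * ((1 / 2 * ∑ j, ∑ k, θ j k * bR (z j) * bR (z k) : ℝ) : ℂ))

/-- The rank-one projection `|G⟩⟨G|`. -/
noncomputable def gProj (n : ℕ) (θ : Fin n → Fin n → ℝ) : QOp n :=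
  Matrix.vecMulVec (gVec n θ) (star (gVec n θ))

/-- `α_k(z) = ∑_{j ∈ C_k} θ_{jk} z_j` (using `θ_{jk} = 0` on non-edges). -/
noncomputable def alphaAngle (n : ℕ) (θ : Fin n → Fin n → ℝ) (k : Fin n) (z : QIdx n) : ℝ :=
  ∑ j, θ j k * bR (z j)

/-- The discretization `α ↦ α^h`, the unique point `jπ/h` with
`jπ/h - π/(2h) ≤ α < jπ/h + π/(2h)`. -/
noncomputable def alphaH (h : ℕ) (α : ℝ) : ℝ :=
  (⌊(h : ℝ) * α / Real.pi + 1 / 2⌋ : ℤ) * Real.pi / h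

/-- Matrix entry `⟨b|α⟩⟨α|b'⟩ = (1/2) e^{iα(b-b')}` of the projection onto
`|α⟩ = (|0⟩ + e^{iα}|1⟩)/√2`. -/
noncomputable def phaseFac (α : ℝ) (b b' : Fin 2) : ℂ :=
  (1 / 2 : ℂ) * Complex.exp (Complex.I * ((α * (bR b - bR b') : ℝ) : ℂ))

/-- The projection `P_l = ∏_{k ∈ A_l} Q_k`, written out entrywise:
`P_l = ∑_z (⊗_{k∈A_l} |α_k(z)⟩⟨α_k(z)|) ⊗ |z⟩⟨z|_{A_l^c}`. -/
noncomputable def Pop (n : ℕ) (θ : Fin n → Fin n → ℝ) (A : Finset (Fin n)) : QOp n :=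
  Matrix.of fun x y =>
    if ∀ j ∉ A, x j = y j then ∏ k ∈ A, phaseFac (alphaAngle n θ k x) (x k) (y k) else 0

/-- The test operator `Ω(𝒜) = (1/m) ∑_l P_l`. -/
noncomputable def OmegaA (n m : ℕ) (θ : Fin n → Fin n → ℝ) (A : Fin m → Finset (Fin n)) :
    QOp n :=
  (m : ℂ)⁻¹ • ∑ l, Pop n θ (A l)

/-- The discretized projection `P_{l;h}` (replace `α_k(z)` by `α_k^h(z)`). -/
noncomputable def PopH (n : ℕ) (θ : Fin n → Fin n → ℝ) (h : ℕ) (A : Finset (Fin n)) : QOp n :=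
  Matrix.of fun x y =>
    if ∀ j ∉ A, x j = y j then
      ∏ k ∈ A, phaseFac (alphaH h (alphaAngle n θ k x)) (x k) (y k) else 0

/-- The discretized test operator `Ω_h(𝒜) = (1/m) ∑_l P_{l;h}`. -/
noncomputable def OmegaAH (n m : ℕ) (θ : Fin n → Fin n → ℝ) (h : ℕ)
    (A : Fin m → Finset (Fin n)) : QOp n :=
  (m : ℂ)⁻¹ • ∑ l, PopH n θ h (A l)

/-- Entry of the single-site operator `(1/h) |α⟩⟨α| + (1 - 1/h) I`. -/
noncomputable def mixFac (h : ℕ) (α : ℝ) (b b' : Fin 2) : ℂ :=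
  (1 - (h : ℂ)⁻¹) * (if b = b' then 1 else 0) + (h : ℂ)⁻¹ * phaseFac α b b'

/-- `P̄_l = ∏_{k ∈ A_l} ((1/h(k)) Q_k + (1 - 1/h(k)) I)`, written out entrywise. -/
noncomputable def PBar (n : ℕ) (θ : Fin n → Fin n → ℝ) (hf : Fin n → ℕ) (A : Finset (Fin n)) :
    QOp n :=
  Matrix.of fun x y =>
    if ∀ j ∉ A, x j = y j then ∏ k ∈ A, mixFac (hf k) (alphaAngle n θ k x) (x k) (y k) else 0

/-- `Ω̄(𝒜)_𝐡 = (1/m) ∑_l P̄_l`. -/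
noncomputable def OmegaBar (n m : ℕ) (θ : Fin n → Fin n → ℝ) (hf : Fin n → ℕ)
    (A : Fin m → Finset (Fin n)) : QOp n :=
  (m : ℂ)⁻¹ • ∑ l, PBar n θ hf (A l)

/-- `P̄_{l;h} = ∏_{k ∈ A_l} ((1/h) Q_{k;h} + (1 - 1/h) I)`, written out entrywise. -/
noncomputable def PBarH (n : ℕ) (θ : Fin n → Fin n → ℝ) (h : ℕ) (A : Finset (Fin n)) : QOp n :=
  Matrix.of fun x y =>
    if ∀ j ∉ A, x j = y j then
      ∏ k ∈ A, mixFac h (alphaH h (alphaAngle n θ k x)) (x k) (y k) else 0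

/-- `Ω̄_h(𝒜) = (1/m) ∑_l P̄_{l;h}`. -/
noncomputable def OmegaBarH (n m : ℕ) (θ : Fin n → Fin n → ℝ) (h : ℕ)
    (A : Fin m → Finset (Fin n)) : QOp n :=
  (m : ℂ)⁻¹ • ∑ l, PBarH n θ h (A l)

/-- Index set for `N+1` copies of the `n`-qubit space. -/
abbrev BIdx (n N : ℕ) := Fin (N + 1) → QIdx n

/-- `(⊗_{j ≠ i} Ω) ⊗ I_i` acting on the `N+1` copies. -/
noncomputable def testAll (n N : ℕ) (Ω : QOp n) (i : Fin (N + 1)) :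
    Matrix (BIdx n N) (BIdx n N) ℂ :=
  Matrix.of fun x y =>
    (if x i = y i then 1 else 0) * ∏ j ∈ Finset.univ.erase i, Ω (x j) (y j)

/-- Acceptance probability `p = (1/(N+1)) ∑_i Tr[((⊗_{j≠i} Ω) ⊗ I_i) ρ]` of the
`N`-random sampling test of `Ω` on a state `ρ` of `N+1` copies. -/
noncomputable def acceptProb (n N : ℕ) (Ω : QOp n) (ρ : Matrix (BIdx n N) (BIdx n N) ℂ) : ℝ :=
  (((N : ℂ) + 1)⁻¹ * ∑ i, (testAll n N Ω i * ρ).trace).re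

/-- Partial trace over all copies except copy `i`. -/
noncomputable def ptraceAt (n N : ℕ) (i : Fin (N + 1))
    (M : Matrix (BIdx n N) (BIdx n N) ℂ) : QOp n :=
  Matrix.of fun a b => ∑ x : BIdx n N, if x i = a then M x (Function.update x i b) else 0

/-- The conditional state of the remaining copy given that the test is passed:
`σ = (1/((N+1)p)) ∑_i Tr_{j≠i}[((⊗_{j≠i} Ω) ⊗ I_i) ρ]`. -/
noncomputable def condState (n N : ℕ) (Ω : QOp n) (ρ : Matrix (BIdx n N) (BIdx n N) ℂ) :
    QOp n :=
  (((((N : ℝ) + 1) * acceptProb n N Ω ρ : ℝ) : ℂ))⁻¹ •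
    ∑ i, ptraceAt n N i (testAll n N Ω i * ρ)

/-- The i.i.d. state `(|G⟩⟨G|)^{⊗(N+1)}`. -/
noncomputable def iidState (n N : ℕ) (θ : Fin n → Fin n → ℝ) :
    Matrix (BIdx n N) (BIdx n N) ℂ :=
  Matrix.of fun x y => ∏ j, gVec n θ (x j) * star (gVec n θ (y j))



private lemma RST.sum_prod_erase_le {K : Type*} [DecidableEq K] (μ : K → ℝ)
    (h0 : ∀ i, 0 ≤ μ i) (h1 : ∀ i, μ i ≤ 1) (s : Finset K) :
    ∑ i ∈ s, ∏ j ∈ s.erase i, μ j ≤ ((s.card : ℝ) - 1) * ∏ j ∈ s, μ j + 1 := by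
  induction s using Finset.induction_on with
  | empty => simp
  | insert a s ha ih =>
    have hP0 : 0 ≤ ∏ j ∈ s, μ j := Finset.prod_nonneg fun j _ => h0 j
    have hP1 : ∏ j ∈ s, μ j ≤ 1 := Finset.prod_le_one (fun j _ => h0 j) (fun j _ => h1 j)
    rw [Finset.sum_insert ha, Finset.erase_insert ha, Finset.prod_insert ha,
      Finset.card_insert_of_notMem ha]
    have hrw : ∀ i ∈ s, ∏ j ∈ (insert a s).erase i, μ j = μ a * ∏ j ∈ s.erase i, μ j := by
      intro i hi
      have hne : a ≠ i := fun h => ha (h ▸ hi)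
      rw [Finset.erase_insert_of_ne hne,
        Finset.prod_insert (fun h => ha (Finset.mem_of_mem_erase h))]

    rw [Finset.sum_congr rfl hrw, ← Finset.mul_sum]
    have hmul : μ a * (∑ i ∈ s, ∏ j ∈ s.erase i, μ j) ≤
        μ a * (((s.card : ℝ) - 1) * ∏ j ∈ s, μ j + 1) :=
      mul_le_mul_of_nonneg_left ih (h0 a)
    push_cast
    nlinarith [h0 a, h1 a, hP0, hP1]

private lemma RST.scalar_key {K : Type*} [Fintype K] [DecidableEq K] (Nr ν : ℝ)
    (hN : 0 ≤ Nr) (hν : 0 ≤ ν) (hcard : (Fintype.card K : ℝ) = Nr + 1)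
    (μ q : K → ℝ) (h0 : ∀ i, 0 ≤ μ i) (h1 : ∀ i, μ i ≤ 1)
    (hq : ∀ i, q i = 0 ∨ (q i = 1 ∧ μ i ≤ 1 - ν)) :
    ∑ i, (Nr * ν * q i + 1) * ∏ j ∈ Finset.univ.erase i, μ j ≤ Nr + 1 := by
  set t : K → ℝ := fun i => ∏ j ∈ Finset.univ.erase i, μ j with ht
  have htP : ∀ i, μ i * t i = ∏ j, μ j := fun i =>
    Finset.mul_prod_erase Finset.univ μ (Finset.mem_univ i)
  have ht0 : ∀ i, 0 ≤ t i := fun i => Finset.prod_nonneg fun j _ => h0 j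
  have hstep : ∀ i, (Nr * ν * q i + 1) * t i ≤ Nr * (t i - ∏ j, μ j) + t i := by
    intro i
    rcases hq i with h | ⟨h, hμ⟩
    · rw [h]
      have : ∏ j, μ j ≤ t i := by rw [← htP i]; nlinarith [ht0 i, h1 i]
      nlinarith
    · rw [h]
      have h2 : ν * t i ≤ t i - ∏ j, μ j := by rw [← htP i]; nlinarith [ht0 i]
      have h3 : Nr * (ν * t i) ≤ Nr * (t i - ∏ j, μ j) := mul_le_mul_of_nonneg_left h2 hN
      nlinarith
  have hsum := RST.sum_prod_erase_le μ h0 h1 Finset.univ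
  rw [Finset.card_univ] at hsum
  have hmain : ∑ i, (Nr * ν * q i + 1) * t i ≤
      (Nr + 1) * (∑ i, t i) - Nr * (Fintype.card K : ℝ) * ∏ j, μ j := by
    calc ∑ i, (Nr * ν * q i + 1) * t i ≤ ∑ i, (Nr * (t i - ∏ j, μ j) + t i) :=
          Finset.sum_le_sum fun i _ => hstep i
      _ = (Nr + 1) * (∑ i, t i) - Nr * (Fintype.card K : ℝ) * ∏ j, μ j := by
          rw [Finset.sum_add_distrib]
          simp only [mul_sub]
          rw [Finset.sum_sub_distrib, ← Finset.mul_sum, Finset.sum_const,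
            Finset.card_univ, nsmul_eq_mul]
          ring
  have hP0 : 0 ≤ ∏ j, μ j := Finset.prod_nonneg fun j _ => h0 j
  have h4 : (Nr + 1) * (∑ i, t i) ≤ (Nr + 1) * (((Fintype.card K : ℝ) - 1) * ∏ j, μ j + 1) :=
    mul_le_mul_of_nonneg_left hsum (by linarith)
  rw [hcard] at h4
  nlinarith [hmain]


private lemma RST.mul_vecMulVec {ι : Type*} [Fintype ι] (A : Matrix ι ι ℂ) (x y : ι → ℂ) :
    A * Matrix.vecMulVec x y = Matrix.vecMulVec (A *ᵥ x) y := by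
  ext a b
  simp only [Matrix.mul_apply, Matrix.vecMulVec_apply, Matrix.mulVec, dotProduct,
    Finset.sum_mul]
  exact Finset.sum_congr rfl fun c _ => by ring

private lemma RST.trace_vecMulVec_mul {ι : Type*} [Fintype ι] (x y : ι → ℂ)
    (ρ : Matrix ι ι ℂ) : (Matrix.vecMulVec x y * ρ).trace = y ⬝ᵥ (ρ *ᵥ x) := by
  simp only [Matrix.trace, Matrix.diag, Matrix.mul_apply, Matrix.vecMulVec_apply,
    dotProduct, Matrix.mulVec]
  rw [Finset.sum_comm]
  exact Finset.sum_congr rfl fun b _ => by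
    rw [Finset.mul_sum]
    exact Finset.sum_congr rfl fun a _ => by ring

/-- completeness of tensored family -/
private lemma RST.tens_complete {ι K : Type*} [Fintype ι] [DecidableEq ι]
    [Fintype K] [DecidableEq K] (u : ι → ι → ℂ)
    (h : ∀ a b : ι, ∑ α, u α a * star (u α b) = if a = b then 1 else 0) :
    ∑ v : K → ι, Matrix.vecMulVec (fun x : K → ι => ∏ j, u (v j) (x j))
      (star fun x : K → ι => ∏ j, u (v j) (x j)) = 1 := by
  ext x y
  simp only [Matrix.sum_apply, Matrix.vecMulVec_apply, Pi.star_apply, Matrix.one_apply]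
  have h1 : ∀ v : K → ι, (∏ j, u (v j) (x j)) * star (∏ j, u (v j) (y j))
      = ∏ j, (u (v j) (x j) * star (u (v j) (y j))) := by
    intro v
    rw [star_prod, ← Finset.prod_mul_distrib]
  rw [Finset.sum_congr rfl fun v _ => h1 v, ← Fintype.prod_sum fun j α => u α (x j) * star (u α (y j))]
  rw [Finset.prod_congr rfl fun j _ => h (x j) (y j)]
  rw [Finset.prod_boole]
  simp [funext_iff]

/-- action of a site operator on a tensor vector -/
private lemma RST.siteOp_mulVec {ι K : Type*} [Fintype ι] [DecidableEq ι]
    [Fintype K] [DecidableEq K] (A B : Matrix ι ι ℂ) (i : K)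
    (u : ι → ι → ℂ) (lam kap : ι → ℂ)
    (hA : ∀ α, A *ᵥ u α = lam α • u α) (hB : ∀ α, B *ᵥ u α = kap α • u α) (v : K → ι) :
    (Matrix.of fun x y : K → ι =>
        B (x i) (y i) * ∏ j ∈ Finset.univ.erase i, A (x j) (y j)) *ᵥ
      (fun x : K → ι => ∏ j, u (v j) (x j))
    = (kap (v i) * ∏ j ∈ Finset.univ.erase i, lam (v j)) •
        fun x : K → ι => ∏ j, u (v j) (x j) := by
  funext x
  set F : K → ι → ℂ := fun j c =>
    if j = i then B (x i) c * u (v i) c else A (x j) c * u (v j) c with hF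
  have key : ∀ y : K → ι, (B (x i) (y i) * ∏ j ∈ Finset.univ.erase i, A (x j) (y j))
        * ∏ j, u (v j) (y j) = ∏ j, F j (y j) := by
    intro y
    have e1 : ∏ j ∈ Finset.univ.erase i, F j (y j)
        = ∏ j ∈ Finset.univ.erase i, (A (x j) (y j) * u (v j) (y j)) :=
      Finset.prod_congr rfl fun j hj => by
        simp only [hF, if_neg (Finset.ne_of_mem_erase hj)]
    calc (B (x i) (y i) * ∏ j ∈ Finset.univ.erase i, A (x j) (y j)) * ∏ j, u (v j) (y j)
        = (B (x i) (y i) * u (v i) (y i)) *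
            ∏ j ∈ Finset.univ.erase i, (A (x j) (y j) * u (v j) (y j)) := by
          rw [← Finset.mul_prod_erase Finset.univ (fun j => u (v j) (y j))
            (Finset.mem_univ i), Finset.prod_mul_distrib]
          ring
      _ = F i (y i) * ∏ j ∈ Finset.univ.erase i, F j (y j) := by
          rw [e1]; simp only [hF, if_pos rfl]
      _ = ∏ j, F j (y j) :=
          Finset.mul_prod_erase Finset.univ (fun j => F j (y j)) (Finset.mem_univ i)
  have hfac : ∀ j : K, (∑ c, F j c)
      = if j = i then kap (v i) * u (v i) (x i) else lam (v j) * u (v j) (x j) := by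
    intro j
    by_cases hj : j = i
    · subst hj
      simp only [hF, if_pos rfl]
      have := congrFun (hB (v j)) (x j)
      simpa [Matrix.mulVec, dotProduct, Pi.smul_apply, smul_eq_mul] using this
    · simp only [hF, if_neg hj]
      have := congrFun (hA (v j)) (x j)
      simpa [Matrix.mulVec, dotProduct, Pi.smul_apply, smul_eq_mul] using this
  show ∑ y : K → ι, (B (x i) (y i) * ∏ j ∈ Finset.univ.erase i, A (x j) (y j))
        * ∏ j, u (v j) (y j) = _
  rw [Finset.sum_congr rfl fun y _ => key y, ← Fintype.prod_sum F,
    Finset.prod_congr rfl fun j _ => hfac j]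
  have e2 : ∏ j ∈ Finset.univ.erase i,
      (if j = i then kap (v i) * u (v i) (x i) else lam (v j) * u (v j) (x j))
      = ∏ j ∈ Finset.univ.erase i, (lam (v j) * u (v j) (x j)) :=
    Finset.prod_congr rfl fun j hj => if_neg (Finset.ne_of_mem_erase hj)
  rw [← Finset.mul_prod_erase Finset.univ _ (Finset.mem_univ i), e2, if_pos rfl,
    Finset.prod_mul_distrib]
  show _ = _ * ∏ j, u (v j) (x j)
  rw [← Finset.mul_prod_erase Finset.univ (fun j => u (v j) (x j)) (Finset.mem_univ i)]
  ring


private lemma RST.sum_update_collapse (n N : ℕ) (i : Fin (N + 1)) (x : BIdx n N)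
    (F : BIdx n N → ℂ) :
    ∑ w : BIdx n N, (if ∀ j, j ≠ i → w j = x j then F w else 0)
      = ∑ b, F (Function.update x i b) := by
  have step1 : ∀ w : BIdx n N, (if ∀ j, j ≠ i → w j = x j then F w else 0)
      = ∑ b, (if w = Function.update x i b then F w else 0) := by
    intro w
    have e := Finset.sum_eq_single (s := Finset.univ) (w i)
      (f := fun b => if w = Function.update x i b then F w else 0)
      (fun b _ hb => if_neg (fun h => hb (by rw [h]; simp)))
      (fun h => absurd (Finset.mem_univ (w i)) h)
    rw [e]
    congr 1
    simp only [eq_iff_iff]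
    constructor
    · intro h
      funext j
      by_cases hj : j = i
      · subst hj; simp
      · rw [Function.update_of_ne hj]; exact h j hj
    · intro h j hj
      rw [h, Function.update_of_ne hj]
  rw [Finset.sum_congr rfl fun w _ => step1 w, Finset.sum_comm]
  refine Finset.sum_congr rfl fun b _ => ?_
  rw [Finset.sum_eq_single (Function.update x i b)]
  · simp
  · intro w _ hw; exact if_neg (fun h => hw h)
  · intro h; exact absurd (Finset.mem_univ _) h

private lemma RST.dot_le_opNorm {ι : Type*} [Fintype ι] [DecidableEq ι]
    (M : Matrix ι ι ℂ) (w : ι → ℂ) :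
    (star w ⬝ᵥ (M *ᵥ w)).re ≤ ‖Matrix.toEuclideanCLM (𝕜 := ℂ) M‖ * (star w ⬝ᵥ w).re := by
  classical
  set x : EuclideanSpace ℂ ι := (WithLp.equiv 2 (ι → ℂ)).symm w with hx
  have hMx : Matrix.toEuclideanCLM (𝕜 := ℂ) M x = (WithLp.equiv 2 (ι → ℂ)).symm (M *ᵥ w) := by
    rw [hx]
    simp [Matrix.toLin'_apply]
  have hinner : (inner ℂ x (Matrix.toEuclideanCLM (𝕜 := ℂ) M x) : ℂ) = star w ⬝ᵥ (M *ᵥ w) := by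
    rw [hMx]
    simp [PiLp.inner_apply, dotProduct, RCLike.inner_apply, mul_comm, hx]
  have hself : (inner ℂ x x : ℂ) = star w ⬝ᵥ w := by
    simp only [hx, WithLp.equiv_symm_apply, PiLp.inner_apply, RCLike.inner_apply, dotProduct, Pi.star_apply]
    exact Finset.sum_congr rfl fun _ _ => mul_comm _ _
  have h1 : (star w ⬝ᵥ (M *ᵥ w)).re ≤ ‖(inner ℂ x (Matrix.toEuclideanCLM (𝕜 := ℂ) M x) : ℂ)‖ := by
    rw [hinner]
    exact Complex.re_le_norm _
  have h2 : ‖(inner ℂ x (Matrix.toEuclideanCLM (𝕜 := ℂ) M x) : ℂ)‖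
      ≤ ‖x‖ * (‖Matrix.toEuclideanCLM (𝕜 := ℂ) M‖ * ‖x‖) :=
    le_trans (norm_inner_le_norm _ _)
      (mul_le_mul_of_nonneg_left ((Matrix.toEuclideanCLM (𝕜 := ℂ) M).le_opNorm x)
        (norm_nonneg x))
  have h3 : ‖x‖ * (‖Matrix.toEuclideanCLM (𝕜 := ℂ) M‖ * ‖x‖)
      = ‖Matrix.toEuclideanCLM (𝕜 := ℂ) M‖ * (star w ⬝ᵥ w).re := by
    have : ((star w ⬝ᵥ w).re) = ‖x‖ ^ 2 := by
      rw [← hself]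
      have h4 := inner_self_eq_norm_sq (𝕜 := ℂ) x
      rw [hself] at h4
      rw [hself]; exact h4
    rw [this]; ring
  linarith


private lemma RST.sum_mulVec' {ι κ : Type*} [Fintype ι] (s : Finset κ)
    (A : κ → Matrix ι ι ℂ) (x : ι → ℂ) :
    (∑ i ∈ s, A i) *ᵥ x = ∑ i ∈ s, (A i *ᵥ x) := by
  ext a
  simp only [Matrix.mulVec, dotProduct, Matrix.sum_apply, Finset.sum_apply,
    Finset.sum_mul]
  exact Finset.sum_comm

private lemma RST.dotProduct_sum' {ι κ : Type*} [Fintype ι] (s : Finset κ)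
    (v : ι → ℂ) (w : κ → ι → ℂ) :
    v ⬝ᵥ (∑ i ∈ s, w i) = ∑ i ∈ s, v ⬝ᵥ w i := by
  simp only [dotProduct, Finset.sum_apply, Finset.mul_sum]
  exact Finset.sum_comm

private lemma RST.smul_vecMulVec {ι : Type*} (c : ℂ) (x y : ι → ℂ) :
    Matrix.vecMulVec (c • x) y = c • Matrix.vecMulVec x y := by
  ext a b
  simp [Matrix.vecMulVec_apply, mul_assoc]


/-- `⟨g| Tr_{≠i}[M] |g⟩ = Tr[M ((|g⟩⟨g|)_i ⊗ I)]`. -/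
private lemma RST.dot_ptrace (n N : ℕ) (g : QIdx n → ℂ) (i : Fin (N + 1))
    (M : Matrix (BIdx n N) (BIdx n N) ℂ) :
    star g ⬝ᵥ (ptraceAt n N i M *ᵥ g)
      = (M * (Matrix.of fun y x : BIdx n N =>
          g (y i) * star (g (x i)) * (if ∀ j, j ≠ i → y j = x j then 1 else 0))).trace := by
  classical
  have lhs1 : star g ⬝ᵥ (ptraceAt n N i M *ᵥ g)
      = ∑ a, ∑ b, ∑ x : BIdx n N,
          (if x i = a then star (g a) * (M x (Function.update x i b) * g b) else 0) := by
    show ∑ a, star (g a) * ∑ b, (∑ x : BIdx n N,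
        if x i = a then M x (Function.update x i b) else 0) * g b = _
    refine Finset.sum_congr rfl fun a _ => ?_
    rw [Finset.mul_sum]
    refine Finset.sum_congr rfl fun b _ => ?_
    rw [Finset.sum_mul, Finset.mul_sum]
    refine Finset.sum_congr rfl fun x _ => ?_
    split_ifs with h
    · ring
    · simp
  rw [lhs1, Finset.sum_comm]
  have lhs2 : ∀ b : QIdx n, (∑ a, ∑ x : BIdx n N,
      (if x i = a then star (g a) * (M x (Function.update x i b) * g b) else 0))
      = ∑ x : BIdx n N, star (g (x i)) * (M x (Function.update x i b) * g b) := by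
    intro b
    rw [Finset.sum_comm]
    refine Finset.sum_congr rfl fun x _ => ?_
    rw [Finset.sum_ite_eq Finset.univ (x i)
      (fun a => star (g a) * (M x (Function.update x i b) * g b))]
    simp
  rw [Finset.sum_congr rfl fun b _ => lhs2 b]
  show _ = ∑ x : BIdx n N, ∑ y : BIdx n N, M x y *
      (g (y i) * star (g (x i)) * (if ∀ j, j ≠ i → y j = x j then 1 else 0))
  have rhs1 : ∀ x : BIdx n N, (∑ y : BIdx n N, M x y *
      (g (y i) * star (g (x i)) * (if ∀ j, j ≠ i → y j = x j then 1 else 0)))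
      = ∑ b, M x (Function.update x i b) * g b * star (g (x i)) := by
    intro x
    have e1 : ∀ y : BIdx n N, M x y *
        (g (y i) * star (g (x i)) * (if ∀ j, j ≠ i → y j = x j then 1 else 0))
        = (if ∀ j, j ≠ i → y j = x j then M x y * g (y i) * star (g (x i)) else 0) := by
      intro y
      split_ifs with h
      · ring
      · ring
    calc ∑ y : BIdx n N, M x y *
        (g (y i) * star (g (x i)) * (if ∀ j, j ≠ i → y j = x j then 1 else 0))
        = ∑ y : BIdx n N,
            (if ∀ j, j ≠ i → y j = x j then M x y * g (y i) * star (g (x i)) else 0) :=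
          Finset.sum_congr rfl fun y _ => e1 y
      _ = ∑ b, M x (Function.update x i b) * g (Function.update x i b i) * star (g (x i)) :=
          RST.sum_update_collapse n N i x (fun y => M x y * g (y i) * star (g (x i)))
      _ = ∑ b, M x (Function.update x i b) * g b * star (g (x i)) :=
          Finset.sum_congr rfl fun b _ => by rw [Function.update_self]
  rw [Finset.sum_congr rfl fun x _ => rhs1 x, Finset.sum_comm]
  refine Finset.sum_congr rfl fun b _ => Finset.sum_congr rfl fun x _ => by ring

/-- `((|g⟩⟨g|)_i ⊗ I) ((⊗_{j≠i} Ω) ⊗ I_i) = (⊗_{j≠i} Ω) ⊗ (|g⟩⟨g|)_i`. -/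
private lemma RST.proj_mul_test (n N : ℕ) (g : QIdx n → ℂ) (Ω : QOp n) (i : Fin (N + 1)) :
    (Matrix.of fun y x : BIdx n N =>
        g (y i) * star (g (x i)) * (if ∀ j, j ≠ i → y j = x j then 1 else 0))
      * testAll n N Ω i
    = Matrix.of fun x y : BIdx n N =>
        (Matrix.vecMulVec g (star g)) (x i) (y i)
          * ∏ j ∈ Finset.univ.erase i, Ω (x j) (y j) := by
  classical
  ext x y
  show ∑ w : BIdx n N, (g (x i) * star (g (w i)) * (if ∀ j, j ≠ i → x j = w j then 1 else 0))
      * ((if w i = y i then 1 else 0) * ∏ j ∈ Finset.univ.erase i, Ω (w j) (y j)) = _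
  have e1 : ∀ w : BIdx n N, (g (x i) * star (g (w i)) *
        (if ∀ j, j ≠ i → x j = w j then 1 else 0))
      * ((if w i = y i then 1 else 0) * ∏ j ∈ Finset.univ.erase i, Ω (w j) (y j))
      = (if ∀ j, j ≠ i → w j = x j then
          g (x i) * star (g (w i)) * ((if w i = y i then 1 else 0)
            * ∏ j ∈ Finset.univ.erase i, Ω (w j) (y j)) else 0) := by
    intro w
    have hiff : (∀ j, j ≠ i → x j = w j) ↔ (∀ j, j ≠ i → w j = x j) :=
      ⟨fun h j hj => (h j hj).symm, fun h j hj => (h j hj).symm⟩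
    rw [if_congr hiff rfl rfl]
    split_ifs <;> ring
  have hcol : (∑ w : BIdx n N, (if ∀ j, j ≠ i → w j = x j then
          g (x i) * star (g (w i)) * ((if w i = y i then 1 else 0)
            * ∏ j ∈ Finset.univ.erase i, Ω (w j) (y j)) else 0))
      = ∑ b, g (x i) * star (g ((Function.update x i b) i)) *
        ((if (Function.update x i b) i = y i then 1 else 0)
          * ∏ j ∈ Finset.univ.erase i, Ω ((Function.update x i b) j) (y j)) :=
    RST.sum_update_collapse n N i x (fun w => g (x i) * star (g (w i)) *
      ((if w i = y i then 1 else 0) * ∏ j ∈ Finset.univ.erase i, Ω (w j) (y j)))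
  rw [Finset.sum_congr rfl fun w _ => e1 w, hcol]
  have e2 : ∀ b, g (x i) * star (g ((Function.update x i b) i)) *
      ((if (Function.update x i b) i = y i then 1 else 0)
        * ∏ j ∈ Finset.univ.erase i, Ω ((Function.update x i b) j) (y j))
      = (if b = y i then g (x i) * star (g b)
          * ∏ j ∈ Finset.univ.erase i, Ω (x j) (y j) else 0) := by
    intro b
    rw [Function.update_self]
    have e3 : ∏ j ∈ Finset.univ.erase i, Ω ((Function.update x i b) j) (y j)
        = ∏ j ∈ Finset.univ.erase i, Ω (x j) (y j) :=
      Finset.prod_congr rfl fun j hj => by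
        rw [Function.update_of_ne (Finset.ne_of_mem_erase hj)]
    rw [e3]
    split_ifs <;> ring
  rw [Finset.sum_congr rfl fun b _ => e2 b,
    Finset.sum_ite_eq' Finset.univ (y i)
      (fun b => g (x i) * star (g b) * ∏ j ∈ Finset.univ.erase i, Ω (x j) (y j))]
  simp [Matrix.vecMulVec_apply]

set_option maxHeartbeats 2000000

/-- Proposition 1 of the paper: the random sampling test guarantee for a general test
operator `Ω` with `|G⟩⟨G| ≤ Ω ≤ I` and spectral gap `ν(Ω) = 1 - ‖Ω - |G⟩⟨G|‖ > 0`. -/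
theorem random_sampling_test_fidelity (n N : ℕ) (hN : 1 ≤ N)
    (g : QIdx n → ℂ) (hg : star g ⬝ᵥ g = 1)
    (Ω : QOp n)
    (hlow : (Ω - Matrix.vecMulVec g (star g)).PosSemidef)
    (hup : ((1 : QOp n) - Ω).PosSemidef)
    (ν : ℝ) (hν : 0 < ν)
    (hνdef : ν = 1 - opNorm (Ω - Matrix.vecMulVec g (star g)))
    (β : ℝ) (hβ0 : 0 < β) (hβ1 : β ≤ 1) (hβ : 1 / ((N : ℝ) * ν + 1) ≤ β)
    (ρ : Matrix (BIdx n N) (BIdx n N) ℂ) (hρ : ρ.PosSemidef) (hρ1 : ρ.trace = 1)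
    (hacc : β ≤ acceptProb n N Ω ρ) :
    1 - (1 - β) / ((N : ℝ) * β * ν) ≤ (star g ⬝ᵥ (condState n N Ω ρ *ᵥ g)).re := by
  classical
  -- abbreviations
  have hg' : ∀ x : QIdx n → ℂ, Matrix.vecMulVec g (star g) *ᵥ x = (star g ⬝ᵥ x) • g := by
    intro x
    funext a
    simp only [Matrix.mulVec, dotProduct, Matrix.vecMulVec_apply, Pi.star_apply,
      Pi.smul_apply, smul_eq_mul, Finset.sum_mul, Finset.mul_sum]
    exact Finset.sum_congr rfl fun b _ => by ring
  have hstar_dot : ∀ a b : QIdx n → ℂ, star (star a ⬝ᵥ b) = star b ⬝ᵥ a := by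
    intro a b
    rw [Matrix.star_dotProduct, star_star]
  have hPig : Matrix.vecMulVec g (star g) *ᵥ g = g := by
    rw [hg', hg, one_smul]
  -- hermitian structure
  have hΩH : Ω.IsHermitian := by
    have h2 : Ω = 1 - ((1 : QOp n) - Ω) := (sub_sub_cancel 1 Ω).symm
    rw [h2]
    exact Matrix.isHermitian_one.sub hup.1
  have hPiPSD : (Matrix.vecMulVec g (star g)).PosSemidef := by
    apply Matrix.PosSemidef.of_dotProduct_mulVec_nonneg
    · show _ᴴ = _
      ext a b
      simp [Matrix.conjTranspose_apply, Matrix.vecMulVec_apply, mul_comm]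
    · intro x
      rw [hg' x, dotProduct_smul, ← hstar_dot g x, smul_eq_mul, mul_comm]
      exact star_mul_self_nonneg _
  have hΩpsd : Ω.PosSemidef := by
    have h3 : (Ω - Matrix.vecMulVec g (star g)) + Matrix.vecMulVec g (star g) = Ω :=
      sub_add_cancel _ _
    rw [← h3]
    exact hlow.add hPiPSD
  -- Ω g = g
  have hΩg : Ω *ᵥ g = g := by
    have hq1 := hlow.dotProduct_mulVec_nonneg g
    have hq2 := hup.dotProduct_mulVec_nonneg g
    have hsumz : star g ⬝ᵥ ((Ω - Matrix.vecMulVec g (star g)) *ᵥ g)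
        + star g ⬝ᵥ (((1 : QOp n) - Ω) *ᵥ g) = 0 := by
      rw [← dotProduct_add, ← Matrix.add_mulVec]
      have : (Ω - Matrix.vecMulVec g (star g)) + ((1 : QOp n) - Ω)
          = 1 - Matrix.vecMulVec g (star g) := by abel
      rw [this, Matrix.sub_mulVec, Matrix.one_mulVec, hPig, sub_self, dotProduct_zero]
    have hle : star g ⬝ᵥ ((Ω - Matrix.vecMulVec g (star g)) *ᵥ g) ≤ 0 := by
      calc star g ⬝ᵥ ((Ω - Matrix.vecMulVec g (star g)) *ᵥ g)
          ≤ star g ⬝ᵥ ((Ω - Matrix.vecMulVec g (star g)) *ᵥ g)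
            + star g ⬝ᵥ (((1 : QOp n) - Ω) *ᵥ g) := le_add_of_nonneg_right hq2
        _ = 0 := hsumz
    have hz : star g ⬝ᵥ ((Ω - Matrix.vecMulVec g (star g)) *ᵥ g) = 0 := le_antisymm hle hq1
    have h4 := (hlow.dotProduct_mulVec_zero_iff g).mp hz
    rw [Matrix.sub_mulVec, hPig, sub_eq_zero] at h4
    exact h4
  -- eigen data
  set u : QIdx n → (QIdx n → ℂ) := fun α => ⇑(hΩH.eigenvectorBasis α) with hudef
  set lam : QIdx n → ℝ := hΩH.eigenvalues with hlamdef
  have huEig : ∀ α, Ω *ᵥ u α = ((lam α : ℝ) : ℂ) • u α := by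
    intro α
    rw [hudef, hlamdef]
    have := hΩH.mulVec_eigenvectorBasis α
    rw [this]
    funext a
    simp [Complex.real_smul]
  have huOrtho : ∀ α β', star (u α) ⬝ᵥ u β' = if α = β' then 1 else 0 := by
    intro α β'
    have h := hΩH.eigenvectorBasis.orthonormal
    rw [orthonormal_iff_ite] at h
    have h2 := h α β'
    rw [← h2]
    simp [PiLp.inner_apply, dotProduct, RCLike.inner_apply, hudef]
    exact Finset.sum_congr rfl fun _ _ => mul_comm _ _
  have huComplete : ∀ a b : QIdx n, ∑ α, u α a * star (u α b) = if a = b then 1 else 0 := by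
    intro a b
    have hU := Matrix.mem_unitaryGroup_iff.mp (Matrix.IsHermitian.eigenvectorUnitary hΩH).2
    have := congrFun (congrFun (congrArg (fun M : QOp n => M) hU) a) b
    have h2 : (((Matrix.IsHermitian.eigenvectorUnitary hΩH) : QOp n)
        * star ((Matrix.IsHermitian.eigenvectorUnitary hΩH) : QOp n)) a b
        = (1 : QOp n) a b := by rw [hU]
    rw [Matrix.mul_apply] at h2
    rw [Matrix.one_apply] at h2
    rw [← h2]
    refine Finset.sum_congr rfl fun α _ => ?_
    rw [Matrix.star_eq_conjTranspose, Matrix.conjTranspose_apply]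
    simp [hudef, Matrix.IsHermitian.eigenvectorUnitary_apply]
  -- eigenvalue bounds
  have hlam0 : ∀ α, 0 ≤ lam α := fun α => hΩpsd.eigenvalues_nonneg α
  have huNorm : ∀ α, star (u α) ⬝ᵥ u α = 1 := by
    intro α
    rw [huOrtho α α, if_pos rfl]
  have hlam1 : ∀ α, lam α ≤ 1 := by
    intro α
    have h2 := hup.dotProduct_mulVec_nonneg (u α)
    rw [Matrix.sub_mulVec, Matrix.one_mulVec, dotProduct_sub, huEig,
      dotProduct_smul, huNorm α, smul_eq_mul, mul_one] at h2
    rw [Complex.le_def] at h2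
    simp only [Complex.sub_re, Complex.one_re, Complex.ofReal_re, Complex.zero_re] at h2
    linarith [h2.1]
  -- ν ≤ 1 is implicit; opNorm fact
  have hopn : opNorm (Ω - Matrix.vecMulVec g (star g)) = 1 - ν := by linarith [hνdef]
  -- Q eigen-relation
  set Qm : QOp n := 1 - Matrix.vecMulVec g (star g) with hQmdef
  set q : QIdx n → ℝ := fun α => if lam α ≤ 1 - ν then 1 else 0 with hqdef
  have hQu : ∀ α, Qm *ᵥ u α = ((q α : ℝ) : ℂ) • u α := by
    intro α
    by_cases hcase : lam α ≤ 1 - ν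
    · -- g ⟂ u α
      have hdot : star g ⬝ᵥ u α = 0 := by
        have e1 : star g ⬝ᵥ (Ω *ᵥ u α) = ((lam α : ℝ) : ℂ) * (star g ⬝ᵥ u α) := by
          rw [huEig, dotProduct_smul, smul_eq_mul]
        have e2 : star g ⬝ᵥ (Ω *ᵥ u α) = star g ⬝ᵥ u α := by
          rw [Matrix.dotProduct_mulVec]
          congr 1
          have e3 : star g ᵥ* Ω = star (Ωᴴ *ᵥ g) := by
            rw [Matrix.star_mulVec, Matrix.conjTranspose_conjTranspose]
          rw [e3, hΩH.eq, hΩg]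
        have e4 : (1 - ((lam α : ℝ) : ℂ)) * (star g ⬝ᵥ u α) = 0 := by
          rw [sub_mul, one_mul, ← e1, e2, sub_self]
        have e5 : (1 - ((lam α : ℝ) : ℂ)) ≠ 0 := by
          intro hcontra
          have : ((lam α : ℝ) : ℂ) = 1 := by linear_combination -hcontra
          have : lam α = 1 := by exact_mod_cast this
          linarith
        exact (mul_eq_zero.mp e4).resolve_left e5
      rw [hQmdef, Matrix.sub_mulVec, Matrix.one_mulVec, hg', hdot, zero_smul, sub_zero,
        hqdef]
      simp [hcase]
    · -- u α is parallel to g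
      set c : ℂ := star g ⬝ᵥ u α with hcdef
      set w : QIdx n → ℂ := u α - c • g with hwdef
      have hgw : star g ⬝ᵥ w = 0 := by
        rw [hwdef, dotProduct_sub, dotProduct_smul, hg, smul_eq_mul, mul_one,
          ← hcdef, sub_self]
      have hwg : star w ⬝ᵥ g = 0 := by
        rw [← hstar_dot g w, hgw, star_zero]
      have hww0 : (0 : ℂ) ≤ star w ⬝ᵥ w := dotProduct_star_self_nonneg w
      have hwu : star w ⬝ᵥ u α = star w ⬝ᵥ w := by
        have : u α = w + c • g := by rw [hwdef]; abel
        rw [this, dotProduct_add, dotProduct_smul, hwg, smul_zero, add_zero]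
      have hquad : star w ⬝ᵥ ((Ω - Matrix.vecMulVec g (star g)) *ᵥ w)
          = ((lam α : ℝ) : ℂ) * (star w ⬝ᵥ w) := by
        rw [Matrix.sub_mulVec, dotProduct_sub, hg' w, hgw, zero_smul,
          dotProduct_zero, sub_zero]
        rw [hwdef, Matrix.mulVec_sub, Matrix.mulVec_smul, hΩg, huEig, ← hwdef]
        rw [dotProduct_sub, dotProduct_smul, dotProduct_smul, hwg,
          smul_zero, sub_zero, hwu, smul_eq_mul]
      have hbound := RST.dot_le_opNorm (Ω - Matrix.vecMulVec g (star g)) w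
      have hopn' : ‖Matrix.toEuclideanCLM (𝕜 := ℂ) (Ω - Matrix.vecMulVec g (star g))‖
          = 1 - ν := hopn
      rw [hopn', hquad] at hbound
      rw [Complex.le_def] at hww0
      simp only [Complex.zero_re, Complex.zero_im] at hww0
      have hre : (((lam α : ℝ) : ℂ) * (star w ⬝ᵥ w)).re = lam α * (star w ⬝ᵥ w).re :=
        Complex.re_ofReal_mul _ _
      rw [hre] at hbound
      have hwwre : (star w ⬝ᵥ w).re = 0 := by nlinarith [hww0.1]
      have hwwz : star w ⬝ᵥ w = 0 := by
        apply Complex.ext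
        · simpa using hwwre
        · simpa using hww0.2.symm
      have hw0 : w = 0 := dotProduct_star_self_eq_zero.mp hwwz
      have hPiu : Matrix.vecMulVec g (star g) *ᵥ u α = c • g := by rw [hg', hcdef]
      have hueq : u α = c • g := by
        have := hwdef
        rw [hw0] at this
        have h5 : u α - c • g = 0 := this.symm
        rw [sub_eq_zero] at h5
        exact h5
      rw [hQmdef, Matrix.sub_mulVec, Matrix.one_mulVec, hPiu, hqdef]
      simp only [if_neg hcase, Complex.ofReal_zero, zero_smul]
      rw [hueq, sub_self]
  -- tensor level objects
  set E : BIdx n N → (BIdx n N → ℂ) := fun v x => ∏ j, u (v j) (x j) with hEdef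
  set Bad : Fin (N + 1) → Matrix (BIdx n N) (BIdx n N) ℂ := fun i =>
    Matrix.of fun x y => Qm (x i) (y i) * ∏ j ∈ Finset.univ.erase i, Ω (x j) (y j)
    with hBaddef
  set Gm : Fin (N + 1) → Matrix (BIdx n N) (BIdx n N) ℂ := fun i =>
    Matrix.of fun x y => (Matrix.vecMulVec g (star g)) (x i) (y i)
      * ∏ j ∈ Finset.univ.erase i, Ω (x j) (y j) with hGmdef
  have hTform : ∀ i, testAll n N Ω i = Matrix.of fun x y : BIdx n N =>
      (1 : QOp n) (x i) (y i) * ∏ j ∈ Finset.univ.erase i, Ω (x j) (y j) := by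
    intro i
    ext x y
    simp [testAll, Matrix.one_apply]
  have hT : ∀ (i : Fin (N + 1)) v, testAll n N Ω i *ᵥ E v
      = ((1 : ℂ) * ∏ j ∈ Finset.univ.erase i, ((lam (v j) : ℝ) : ℂ)) • E v := by
    intro i v
    rw [hTform i]
    exact RST.siteOp_mulVec Ω (1 : QOp n) i u (fun α => ((lam α : ℝ) : ℂ))
      (fun _ => (1 : ℂ)) huEig (fun α => by rw [Matrix.one_mulVec, one_smul]) v
  have hBv : ∀ (i : Fin (N + 1)) v, Bad i *ᵥ E v
      = (((q (v i) : ℝ) : ℂ) * ∏ j ∈ Finset.univ.erase i, ((lam (v j) : ℝ) : ℂ)) • E v := by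
    intro i v
    exact RST.siteOp_mulVec Ω Qm i u (fun α => ((lam α : ℝ) : ℂ))
      (fun α => ((q α : ℝ) : ℂ)) huEig hQu v
  have hsplit : ∀ i, testAll n N Ω i = Gm i + Bad i := by
    intro i
    rw [hTform i]
    ext x y
    simp only [Matrix.of_apply, Matrix.add_apply, hGmdef, hBaddef, hQmdef, Matrix.sub_apply]
    ring
  -- the coefficient
  set cv : BIdx n N → ℝ := fun v => ((N : ℝ) + 1)
      - (∑ i, ∏ j ∈ Finset.univ.erase i, lam (v j))
      - ((N : ℝ) * ν) * ∑ i, q (v i) * ∏ j ∈ Finset.univ.erase i, lam (v j) with hcvdef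
  have hcv0 : ∀ v, 0 ≤ cv v := by
    intro v
    have hkey := RST.scalar_key (N : ℝ) ν (Nat.cast_nonneg N) hν.le
      (by simp) (fun i => lam (v i)) (fun i => q (v i))
      (fun i => hlam0 (v i)) (fun i => hlam1 (v i))
      (fun i => by
        by_cases hc : lam (v i) ≤ 1 - ν
        · exact Or.inr ⟨by rw [hqdef]; simp [hc], hc⟩
        · exact Or.inl (by rw [hqdef]; simp [hc]))
    have hre : ∑ i, ((N : ℝ) * ν * q (v i) + 1) * ∏ j ∈ Finset.univ.erase i, lam (v j)
        = ((N : ℝ) * ν) * (∑ i, q (v i) * ∏ j ∈ Finset.univ.erase i, lam (v j))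
          + ∑ i, ∏ j ∈ Finset.univ.erase i, lam (v j) := by
      rw [Finset.mul_sum, ← Finset.sum_add_distrib]
      exact Finset.sum_congr rfl fun i _ => by ring
    rw [hre] at hkey
    rw [hcvdef]
    simp only
    linarith
  -- the PSD certificate matrix
  set Mc : Matrix (BIdx n N) (BIdx n N) ℂ :=
    ((((N : ℝ) + 1 : ℝ)) : ℂ) • (1 : Matrix (BIdx n N) (BIdx n N) ℂ)
      - (∑ i, testAll n N Ω i)
      - (((N : ℝ) * ν : ℝ) : ℂ) • ∑ i, Bad i with hMcdef
  have hME : ∀ v, Mc *ᵥ E v = ((cv v : ℝ) : ℂ) • E v := by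
    intro v
    rw [hMcdef, Matrix.sub_mulVec, Matrix.sub_mulVec, Matrix.smul_mulVec,
      Matrix.one_mulVec, Matrix.smul_mulVec, RST.sum_mulVec', RST.sum_mulVec']
    rw [Finset.sum_congr rfl fun i _ => hT i v, Finset.sum_congr rfl fun i _ => hBv i v]
    rw [← Finset.sum_smul, ← Finset.sum_smul, smul_smul, ← sub_smul, ← sub_smul]
    congr 1
    simp only [hcvdef]
    push_cast
    simp only [one_mul]
  have hMeq : Mc = ∑ v, ((cv v : ℝ) : ℂ) • Matrix.vecMulVec (E v) (star (E v)) := by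
    have hone := RST.tens_complete (K := Fin (N + 1)) u huComplete
    calc Mc = Mc * 1 := (mul_one Mc).symm
      _ = Mc * ∑ v, Matrix.vecMulVec (E v) (star (E v)) := by
          rw [← hone]
      _ = ∑ v, Mc * Matrix.vecMulVec (E v) (star (E v)) := Finset.mul_sum _ _ _
      _ = ∑ v, ((cv v : ℝ) : ℂ) • Matrix.vecMulVec (E v) (star (E v)) := by
          refine Finset.sum_congr rfl fun v _ => ?_
          rw [RST.mul_vecMulVec, hME v, RST.smul_vecMulVec]
  -- trace estimates
  have htraceMc : (Mc * ρ).trace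
      = ∑ v, ((cv v : ℝ) : ℂ) * (star (E v) ⬝ᵥ (ρ *ᵥ E v)) := by
    rw [hMeq, Finset.sum_mul, Matrix.trace_sum]
    refine Finset.sum_congr rfl fun v _ => ?_
    rw [smul_mul_assoc, Matrix.trace_smul, RST.trace_vecMulVec_mul, smul_eq_mul]
  have htrMcre : 0 ≤ ((Mc * ρ).trace).re := by
    rw [htraceMc]
    rw [Complex.re_sum]
    refine Finset.sum_nonneg fun v _ => ?_
    rw [Complex.re_ofReal_mul]
    have hρv := hρ.dotProduct_mulVec_nonneg (E v)
    rw [Complex.le_def] at hρv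
    simp only [Complex.zero_re] at hρv
    exact mul_nonneg (hcv0 v) hρv.1
  have hexp : (Mc * ρ).trace
      = ((((N : ℝ) + 1 : ℝ)) : ℂ) - (∑ i, (testAll n N Ω i * ρ).trace)
        - (((N : ℝ) * ν : ℝ) : ℂ) * ∑ i, (Bad i * ρ).trace := by
    rw [hMcdef, Matrix.sub_mul, Matrix.sub_mul, Matrix.smul_mul, Matrix.one_mul,
      Matrix.trace_sub, Matrix.trace_sub, Matrix.trace_smul, hρ1, Finset.sum_mul,
      Matrix.trace_sum, Matrix.smul_mul, Matrix.trace_smul, Finset.sum_mul,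
      Matrix.trace_sum, smul_eq_mul, smul_eq_mul, mul_one]
  -- acceptance probability
  set P : ℝ := acceptProb n N Ω ρ with hPdef
  have hP0 : 0 < P := lt_of_lt_of_le hβ0 hacc
  have hN1 : (0 : ℝ) < (N : ℝ) + 1 := by positivity
  have hSTre : (∑ i, (testAll n N Ω i * ρ).trace).re = ((N : ℝ) + 1) * P := by
    have hPe : P = ((((N : ℂ)) + 1)⁻¹ * ∑ i, (testAll n N Ω i * ρ).trace).re := rfl
    have hcast : ((N : ℂ) + 1) = ((((N : ℝ) + 1) : ℝ) : ℂ) := by push_cast; ring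
    rw [hcast, ← Complex.ofReal_inv, Complex.re_ofReal_mul] at hPe
    rw [hPe]
    field_simp
  -- key inequality: (N+1)P + Nν * SB.re ≤ N+1
  have hkeyineq : ((N : ℝ) + 1) * P
      + ((N : ℝ) * ν) * (∑ i, (Bad i * ρ).trace).re ≤ (N : ℝ) + 1 := by
    have h6 := congrArg Complex.re hexp
    rw [Complex.sub_re, Complex.sub_re, Complex.ofReal_re, Complex.re_ofReal_mul,
      hSTre] at h6
    rw [h6] at htrMcre
    linarith
  -- split of the test trace
  have hT_GB : ∑ i, (testAll n N Ω i * ρ).trace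
      = (∑ i, (Gm i * ρ).trace) + ∑ i, (Bad i * ρ).trace := by
    rw [← Finset.sum_add_distrib]
    refine Finset.sum_congr rfl fun i _ => ?_
    rw [hsplit i, Matrix.add_mul, Matrix.trace_add]
  -- fidelity expression
  have hcond : star g ⬝ᵥ (condState n N Ω ρ *ᵥ g)
      = (((((N : ℝ) + 1) * P : ℝ)) : ℂ)⁻¹ * ∑ i, (Gm i * ρ).trace := by
    show star g ⬝ᵥ (((((((N : ℝ) + 1) * acceptProb n N Ω ρ : ℝ) : ℂ))⁻¹ •
        ∑ i, ptraceAt n N i (testAll n N Ω i * ρ)) *ᵥ g) = _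
    rw [Matrix.smul_mulVec, dotProduct_smul, smul_eq_mul, ← hPdef]
    congr 1
    rw [RST.sum_mulVec', RST.dotProduct_sum']
    refine Finset.sum_congr rfl fun i _ => ?_
    rw [RST.dot_ptrace n N g i (testAll n N Ω i * ρ), Matrix.trace_mul_comm,
      ← Matrix.mul_assoc, RST.proj_mul_test n N g Ω i]
  have hfidre : (star g ⬝ᵥ (condState n N Ω ρ *ᵥ g)).re
      = (((N : ℝ) + 1) * P)⁻¹ * (∑ i, (Gm i * ρ).trace).re := by
    rw [hcond, ← Complex.ofReal_inv, Complex.re_ofReal_mul]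
  -- final arithmetic
  have hSGre : (∑ i, (Gm i * ρ).trace).re
      = ((N : ℝ) + 1) * P - (∑ i, (Bad i * ρ).trace).re := by
    have h7 := congrArg Complex.re hT_GB
    rw [Complex.add_re, hSTre] at h7
    linarith
  have hNν : (0 : ℝ) < (N : ℝ) * ν := by
    have : (1 : ℝ) ≤ (N : ℝ) := by exact_mod_cast hN
    nlinarith
  have hD : (0 : ℝ) < ((N : ℝ) + 1) * P := by positivity
  have hNβν : (0 : ℝ) < (N : ℝ) * β * ν := by
    have : (1 : ℝ) ≤ (N : ℝ) := by exact_mod_cast hN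
    nlinarith
  have hkey2 : (∑ i, (Bad i * ρ).trace).re * ((N : ℝ) * ν) ≤ ((N : ℝ) + 1) * (1 - P) := by
    nlinarith [hkeyineq]
  have hfrac : (∑ i, (Bad i * ρ).trace).re / (((N : ℝ) + 1) * P)
      ≤ (1 - β) / ((N : ℝ) * β * ν) := by
    rw [div_le_div_iff₀ hD hNβν]
    nlinarith [mul_le_mul_of_nonneg_left hkey2 hβ0.le,
      mul_nonneg (sub_nonneg.mpr hacc) hN1.le]
  rw [hfidre, hSGre]
  have hrw : (((N : ℝ) + 1) * P)⁻¹ * (((N : ℝ) + 1) * P - (∑ i, (Bad i * ρ).trace).re)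
      = 1 - (∑ i, (Bad i * ρ).trace).re / (((N : ℝ) + 1) * P) := by
    field_simp
  rw [hrw]
  linarith


end
end

section
/- For every l ∈ {1,…,m}, the projection P_l fixes the weighted graph state: P_l |G⟩ = |G⟩. Consequently Ω(𝒜)|G⟩ = |G⟩, so ⟨G|Ω(𝒜)|G⟩ = 1 and |G⟩⟨G| ≤ Ω(𝒜) ≤ I. -/
open scoped BigOperators ComplexOrder
open Matrix Complex

noncomputable section

/-!
Since `A_l` is independent, `α_k(x)` for `k ∈ A_l` depends only on the qubits outside `A_l`.
Hence `P_l = D E D*`, where `E` is the orthogonal projection onto the vectors that do not depend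
on the qubits in `A_l` and `D` is the diagonal unitary `|x⟩ ↦ e^{i ∑_{k ∈ A_l} α_k(x) x_k} |x⟩`;
in particular `P_l` is a projection. Splitting the quadratic phase of `|G⟩` along `A_l` and its
complement shows that `D*|G⟩` does not depend on the qubits in `A_l`, so `E` fixes it and
`P_l|G⟩ = |G⟩`. A projection fixing the unit vector `|G⟩` lies between `|G⟩⟨G|` and `I`, and
both bounds survive averaging over `l`.
-/

open Finset

theorem IsStarProjection.conjugate {R : Type*} [Ring R] [StarRing R] {p U : R}
    (hp : IsStarProjection p) (hU : star U * U = 1) : IsStarProjection (U * p * star U) where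
  isSelfAdjoint := hp.isSelfAdjoint.conjugate U
  isIdempotentElem := by
    calc U * p * star U * (U * p * star U) = U * p * (star U * U) * p * star U := by
          simp only [mul_assoc]
      _ = U * p * star U := by rw [hU, mul_one, mul_assoc U p p, hp.isIdempotentElem.eq]

theorem inv_natCast_smul_sum_sub {K M : Type*} [DivisionRing K] [CharZero K] [AddCommGroup M]
    [Module K M] {m : ℕ} (hm : m ≠ 0) (P : Fin m → M) (Q : M) :
    (m : K)⁻¹ • ∑ l, (P l - Q) = (m : K)⁻¹ • ∑ l, P l - Q := by
  rw [sum_sub_distrib, smul_sub, sum_const, card_univ, Fintype.card_fin,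
    ← Nat.cast_smul_eq_nsmul K, smul_smul, inv_mul_cancel₀ (Nat.cast_ne_zero.2 hm), one_smul]

namespace Matrix

open scoped MatrixOrder

variable {ι 𝕜 : Type*} [RCLike 𝕜]

theorem isStarProjection_vecMulVec_self_star [Fintype ι] {v : ι → 𝕜} (hv : star v ⬝ᵥ v = 1) :
    IsStarProjection (vecMulVec v (star v)) where
  isSelfAdjoint := by rw [IsSelfAdjoint, star_eq_conjTranspose, conjTranspose_vecMulVec, star_star]
  isIdempotentElem := by rw [IsIdempotentElem, vecMulVec_mul_vecMulVec, hv, one_smul]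

theorem inv_natCast_smul_sum_mulVec [Fintype ι] {m : ℕ} (hm : m ≠ 0) {P : Fin m → Matrix ι ι 𝕜}
    {v : ι → 𝕜} (h : ∀ l, P l *ᵥ v = v) : ((m : 𝕜)⁻¹ • ∑ l, P l) *ᵥ v = v := by
  rw [smul_mulVec, sum_mulVec, sum_congr rfl fun l _ => h l, sum_const, card_univ,
    Fintype.card_fin, ← Nat.cast_smul_eq_nsmul 𝕜, smul_smul,
    inv_mul_cancel₀ (Nat.cast_ne_zero.2 hm), one_smul]

theorem le_inv_natCast_smul_sum {m : ℕ} (hm : m ≠ 0) {P : Fin m → Matrix ι ι 𝕜}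
    {Q : Matrix ι ι 𝕜} (h : ∀ l, Q ≤ P l) : Q ≤ (m : 𝕜)⁻¹ • ∑ l, P l := by
  rw [le_iff, ← inv_natCast_smul_sum_sub hm]
  exact (posSemidef_sum _ fun l _ => h l).smul (inv_nonneg.2 (Nat.cast_nonneg m))

theorem inv_natCast_smul_sum_le {m : ℕ} (hm : m ≠ 0) {P : Fin m → Matrix ι ι 𝕜}
    {Q : Matrix ι ι 𝕜} (h : ∀ l, P l ≤ Q) : (m : 𝕜)⁻¹ • ∑ l, P l ≤ Q := by
  rw [le_iff, ← neg_sub, ← inv_natCast_smul_sum_sub hm, ← smul_neg, ← sum_neg_distrib]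
  simp_rw [neg_sub]
  exact (posSemidef_sum _ fun l _ => h l).smul (inv_nonneg.2 (Nat.cast_nonneg m))

end Matrix

theorem sum_sum_mul_mul_eq_two_mul_add {ι : Type*} [Fintype ι] [DecidableEq ι]
    {θ : ι → ι → ℝ} {A : Finset ι} (hsym : ∀ j k, θ j k = θ k j)
    (hA : ∀ j ∈ A, ∀ k ∈ A, θ j k = 0) (x : ι → ℝ) :
    ∑ j, ∑ k, θ j k * x j * x k
      = 2 * ∑ k ∈ A, (∑ j, θ j k * x j) * x k + ∑ j ∈ Aᶜ, ∑ k ∈ Aᶜ, θ j k * x j * x k := by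
  have hcol : ∀ k ∈ A, ∑ j, θ j k * x j * x k = ∑ j ∈ Aᶜ, θ j k * x j * x k := fun k hk => by
    rw [← sum_add_sum_compl A, sum_eq_zero fun j hj => by rw [hA j hj k hk]; ring, zero_add]
  have hrow : ∀ j ∈ A, ∑ k, θ j k * x j * x k = ∑ k ∈ Aᶜ, θ k j * x k * x j := fun j hj => by
    rw [← sum_add_sum_compl A, sum_eq_zero fun k hk => by rw [hA j hj k hk]; ring, zero_add]
    exact sum_congr rfl fun k _ => by rw [hsym]; ring
  simp_rw [sum_mul]
  rw [← sum_add_sum_compl A, sum_congr rfl hrow, sum_comm (s := A)]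
  conv_lhs => enter [2, 2, j]; rw [← sum_add_sum_compl A]
  rw [sum_add_distrib, sum_congr rfl hcol, sum_comm (s := Aᶜ) (t := A)]
  ring

theorem Complex.star_exp_I_mul_ofReal (r : ℝ) : star (exp (I * r)) = exp (-(I * r)) := by
  rw [RCLike.star_def, ← exp_conj, map_mul, conj_I, conj_ofReal, neg_mul]

section GraphState

variable {n : ℕ}

theorem star_gVec_dotProduct_gVec (θ : Fin n → Fin n → ℝ) : star (gVec n θ) ⬝ᵥ gVec n θ = 1 := by
  have hterm : ∀ z, star (gVec n θ z) * gVec n θ z = ((2 : ℂ) ^ n)⁻¹ := fun z => by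
    rw [gVec, star_mul', star_exp_I_mul_ofReal, RCLike.star_def, conj_ofReal, mul_mul_mul_comm,
      ← exp_add, neg_add_cancel, exp_zero, mul_one, ← ofReal_mul, ← mul_inv,
      Real.mul_self_sqrt (by positivity)]
    push_cast
    rfl
  simp only [dotProduct, Pi.star_apply, hterm, sum_const, card_univ, Fintype.card_fun,
    Fintype.card_fin, nsmul_eq_mul]
  push_cast
  exact mul_inv_cancel₀ (by positivity)

theorem card_filter_agreeOff (A : Finset (Fin n)) (x : QIdx n) :
    #{w : QIdx n | ∀ j ∉ A, x j = w j} = 2 ^ #A := by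
  rw [← Fintype.card_subtype]
  let e : {w : QIdx n // ∀ j ∉ A, x j = w j} ≃ (A → Fin 2) :=
    { toFun := fun w k => w.1 k
      invFun := fun g => ⟨fun j => if h : j ∈ A then g ⟨j, h⟩ else x j, fun j hj => by simp [hj]⟩
      left_inv := fun w => by
        ext j
        by_cases h : j ∈ A
        · simp [h]
        · simp [h, w.2 j h]
      right_inv := fun g => by ext k; simp }
  simp [Fintype.card_congr e]

theorem sum_ite_agreeOff {A : Finset (Fin n)} {x : QIdx n} {f : QIdx n → ℂ}
    (hf : ∀ w, (∀ j ∉ A, x j = w j) → f w = f x) :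
    ∑ w, (if ∀ j ∉ A, x j = w j then f w else 0) = 2 ^ #A * f x := by
  rw [← sum_filter, sum_congr rfl fun w hw => hf w (mem_filter.1 hw).2, sum_const,
    card_filter_agreeOff, nsmul_eq_mul]
  push_cast
  rfl

/-- The orthogonal projection onto the vectors that do not depend on the qubits in `A`. -/
def avgOver (A : Finset (Fin n)) : QOp n :=
  Matrix.of fun x y => if ∀ j ∉ A, x j = y j then ((2 : ℂ) ^ #A)⁻¹ else 0

theorem isStarProjection_avgOver (A : Finset (Fin n)) : IsStarProjection (avgOver A) where
  isSelfAdjoint := by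
    ext x y
    have hsymm : (∀ j ∉ A, y j = x j) ↔ ∀ j ∉ A, x j = y j := forall₂_congr fun _ _ => eq_comm
    simp only [star_apply, avgOver, of_apply, hsymm, apply_ite star, star_zero, star_inv₀,
      star_pow, star_ofNat]
  isIdempotentElem := by
    ext x y
    have htrans : ∀ w : QIdx n, (∀ j ∉ A, x j = w j) →
        ((∀ j ∉ A, w j = y j) ↔ ∀ j ∉ A, x j = y j) := fun w hw =>
      forall₂_congr fun j hj => by rw [hw j hj]
    simp only [mul_apply, avgOver, of_apply, ite_mul, zero_mul]
    rw [sum_ite_agreeOff fun w hw => by simp only [htrans w hw], ← mul_assoc,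
      mul_inv_cancel₀ (by positivity), one_mul]

theorem avgOver_mulVec_of_agreeOff {A : Finset (Fin n)} {v : QIdx n → ℂ}
    (hv : ∀ x w, (∀ j ∉ A, x j = w j) → v w = v x) : avgOver A *ᵥ v = v := by
  ext x
  simp only [mulVec, dotProduct, avgOver, of_apply, ite_mul, zero_mul]
  rw [sum_ite_agreeOff (f := fun w => ((2 : ℂ) ^ #A)⁻¹ * v w) fun w hw => by rw [hv x w hw],
    ← mul_assoc, mul_inv_cancel₀ (by positivity), one_mul]

def sitePhase (θ : Fin n → Fin n → ℝ) (A : Finset (Fin n)) (x : QIdx n) : ℝ :=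
  ∑ k ∈ A, alphaAngle n θ k x * bR (x k)

def phaseDiag (θ : Fin n → Fin n → ℝ) (A : Finset (Fin n)) : QOp n :=
  diagonal fun x => exp (I * sitePhase θ A x)

variable {θ : Fin n → Fin n → ℝ} {A : Finset (Fin n)}

theorem phaseDiag_mem_unitary : phaseDiag θ A ∈ unitary (QOp n) := by
  have h : ∀ r : ℝ, star (exp (I * r)) * exp (I * r) = 1 := fun r => by
    rw [star_exp_I_mul_ofReal, ← exp_add, neg_add_cancel, exp_zero]
  rw [Unitary.mem_iff, phaseDiag, star_eq_conjTranspose, diagonal_conjTranspose,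
    diagonal_mul_diagonal, diagonal_mul_diagonal]
  simp only [Pi.star_apply, h, mul_comm _ (star _)]
  exact ⟨diagonal_one, diagonal_one⟩

theorem alphaAngle_eq_of_agreeOff (hA : ∀ j ∈ A, ∀ k ∈ A, θ j k = 0) {x y : QIdx n}
    (hxy : ∀ j ∉ A, x j = y j) {k : Fin n} (hk : k ∈ A) :
    alphaAngle n θ k x = alphaAngle n θ k y := by
  refine sum_congr rfl fun j _ => ?_
  by_cases hj : j ∈ A
  · simp [hA j hj k hk]
  · rw [hxy j hj]

theorem Pop_eq_phaseDiag_mul_avgOver (hA : ∀ j ∈ A, ∀ k ∈ A, θ j k = 0) :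
    Pop n θ A = phaseDiag θ A * avgOver A * star (phaseDiag θ A) := by
  ext x y
  rw [phaseDiag, star_eq_conjTranspose, diagonal_conjTranspose, mul_diagonal, diagonal_mul,
    Pop, avgOver, of_apply, of_apply]
  split_ifs with hxy
  · have hφ : sitePhase θ A x - sitePhase θ A y
        = ∑ k ∈ A, alphaAngle n θ k x * (bR (x k) - bR (y k)) := by
      rw [sitePhase, sitePhase, ← sum_sub_distrib]
      exact sum_congr rfl fun k hk => by rw [alphaAngle_eq_of_agreeOff hA hxy hk]; ring
    simp only [phaseFac, Pi.star_apply]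
    rw [prod_mul_distrib, prod_const, ← exp_sum, star_exp_I_mul_ofReal, mul_right_comm,
      ← exp_add, one_div, inv_pow, mul_comm]
    congr 2
    rw [← mul_sum, ← ofReal_sum, ← hφ]
    push_cast
    ring
  · simp

theorem isStarProjection_Pop (hA : ∀ j ∈ A, ∀ k ∈ A, θ j k = 0) :
    IsStarProjection (Pop n θ A) := by
  rw [Pop_eq_phaseDiag_mul_avgOver hA]
  exact (isStarProjection_avgOver A).conjugate (Unitary.star_mul_self_of_mem phaseDiag_mem_unitary)

theorem star_phaseDiag_mulVec_gVec_eq_of_agreeOff (hsym : ∀ j k, θ j k = θ k j)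
    (hA : ∀ j ∈ A, ∀ k ∈ A, θ j k = 0) {x y : QIdx n} (hxy : ∀ j ∉ A, x j = y j) :
    (star (phaseDiag θ A) *ᵥ gVec n θ) x = (star (phaseDiag θ A) *ᵥ gVec n θ) y := by
  have hreduced : ∀ z : QIdx n, (star (phaseDiag θ A) *ᵥ gVec n θ) z
      = ((Real.sqrt (2 ^ n))⁻¹ : ℝ) *
        exp (I * ((1 / 2 * ∑ j ∈ Aᶜ, ∑ k ∈ Aᶜ, θ j k * bR (z j) * bR (z k) : ℝ) : ℂ)) := by
    intro z
    have hquad := sum_sum_mul_mul_eq_two_mul_add hsym hA (fun j => bR (z j))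
    rw [phaseDiag, star_eq_conjTranspose, diagonal_conjTranspose, mulVec_diagonal, Pi.star_apply,
      star_exp_I_mul_ofReal, gVec, mul_left_comm, ← exp_add]
    congr 3
    rw [← sub_eq_neg_add, ← mul_sub, ← ofReal_sub, sitePhase]
    congr 2
    unfold alphaAngle
    linarith
  rw [hreduced, hreduced]
  congr 5
  refine sum_congr rfl fun j hj => sum_congr rfl fun k hk => ?_
  rw [hxy j (mem_compl.1 hj), hxy k (mem_compl.1 hk)]

theorem Pop_mulVec_gVec (hsym : ∀ j k, θ j k = θ k j) (hA : ∀ j ∈ A, ∀ k ∈ A, θ j k = 0) :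
    Pop n θ A *ᵥ gVec n θ = gVec n θ := by
  rw [Pop_eq_phaseDiag_mul_avgOver hA, ← mulVec_mulVec, ← mulVec_mulVec,
    avgOver_mulVec_of_agreeOff fun x y hxy =>
      (star_phaseDiag_mulVec_gVec_eq_of_agreeOff hsym hA hxy).symm,
    mulVec_mulVec, Unitary.mul_star_self_of_mem phaseDiag_mem_unitary, one_mulVec]

end GraphState

theorem Pop_fixes_graphState_general
    (n m : ℕ) (hm : 1 ≤ m)
    (G : SimpleGraph (Fin n)) (θ : Fin n → Fin n → ℝ)
    (hsym : ∀ j k, θ j k = θ k j)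
    (hθ : ∀ j k, ¬ G.Adj j k → θ j k = 0)
    (A : Fin m → Finset (Fin n))
    (hind : ∀ l, ∀ j ∈ A l, ∀ k ∈ A l, ¬ G.Adj j k)
    :
    (∀ l, Pop n θ (A l) *ᵥ gVec n θ = gVec n θ) ∧
    OmegaA n m θ A *ᵥ gVec n θ = gVec n θ ∧
    star (gVec n θ) ⬝ᵥ (OmegaA n m θ A *ᵥ gVec n θ) = 1 ∧
    (OmegaA n m θ A - gProj n θ).PosSemidef ∧
    ((1 : QOp n) - OmegaA n m θ A).PosSemidef := by
  have hm0 : m ≠ 0 := by omega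
  have hA l : ∀ j ∈ A l, ∀ k ∈ A l, θ j k = 0 := fun j hj k hk => hθ j k (hind l j hj k hk)
  have hfix l : Pop n θ (A l) *ᵥ gVec n θ = gVec n θ := Pop_mulVec_gVec hsym (hA l)
  have hΩ : OmegaA n m θ A *ᵥ gVec n θ = gVec n θ := inv_natCast_smul_sum_mulVec hm0 hfix
  have hP l := isStarProjection_Pop (hA l)
  have hG : IsStarProjection (gProj n θ) :=
    isStarProjection_vecMulVec_self_star (star_gVec_dotProduct_gVec θ)
  have hPG l : Pop n θ (A l) * gProj n θ = gProj n θ := by rw [gProj, mul_vecMulVec, hfix]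
  open scoped MatrixOrder in
  exact ⟨hfix, hΩ, by rw [hΩ, star_gVec_dotProduct_gVec],
    le_inv_natCast_smul_sum hm0 fun l => hG.le_of_mul_eq_right (hP l) (hPG l),
    inv_natCast_smul_sum_le hm0 fun l => (hP l).le_one⟩

/-- Each projection `P_l` fixes the weighted graph state, hence `Ω(𝒜)|G⟩ = |G⟩`,
`⟨G|Ω(𝒜)|G⟩ = 1` and `|G⟩⟨G| ≤ Ω(𝒜) ≤ I`. -/
theorem Pop_fixes_graphState
    (n m : ℕ) (hn : 1 ≤ n) (hm : 1 ≤ m)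
    (G : SimpleGraph (Fin n)) (θ : Fin n → Fin n → ℝ)
    (hsym : ∀ j k, θ j k = θ k j)
    (hθ : ∀ j k, ¬ G.Adj j k → θ j k = 0)
    (A : Fin m → Finset (Fin n))
    (hdisj : ∀ l l', l ≠ l' → Disjoint (A l) (A l'))
    (hcover : ∀ v : Fin n, ∃ l, v ∈ A l)
    (hne : ∀ l, (A l).Nonempty)
    (hind : ∀ l, ∀ j ∈ A l, ∀ k ∈ A l, ¬ G.Adj j k)
    :
    (∀ l, Pop n θ (A l) *ᵥ gVec n θ = gVec n θ) ∧
    OmegaA n m θ A *ᵥ gVec n θ = gVec n θ ∧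
    star (gVec n θ) ⬝ᵥ (OmegaA n m θ A *ᵥ gVec n θ) = 1 ∧
    (OmegaA n m θ A - gProj n θ).PosSemidef ∧
    ((1 : QOp n) - OmegaA n m θ A).PosSemidef :=
  Pop_fixes_graphState_general n m hm G θ hsym hθ A hind
end
end

section
/- The product of the m test projections equals the rank-one projection onto the weighted graph state: ∏_{l=1}^m P_l = |G⟩⟨G|. -/
open scoped BigOperators ComplexOrder
open Matrix Complex

noncomputable section

/-! ### Auxiliary development for `prod_Pop_eq_gProj` -/

/-- Sum of `θ_{jk} z_j z_k` over (ordered) pairs touching `S`, halved. -/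
def ES (n : ℕ) (θ : Fin n → Fin n → ℝ) (S : Finset (Fin n)) (z : QIdx n) : ℝ :=
  (1/2) * ∑ j, ∑ k, if j ∈ S ∨ k ∈ S then θ j k * bR (z j) * bR (z k) else 0

/-- The claimed closed form for the partial products of the `P_l`. -/
noncomputable def Mform (n : ℕ) (θ : Fin n → Fin n → ℝ) (S : Finset (Fin n)) : QOp n :=
  Matrix.of fun x y => if ∀ j ∉ S, x j = y j then
    (1/2 : ℂ) ^ S.card * Complex.exp (Complex.I * ((ES n θ S x - ES n θ S y : ℝ) : ℂ)) else 0

lemma pt_id (θjk : ℝ) (Xj Xk Yj Yk Wj Wk : ℝ)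
    (jA jS kA kS : Prop) [Decidable jA] [Decidable jS] [Decidable kA] [Decidable kS]
    (hj : ¬(jA ∧ jS)) (hk : ¬(kA ∧ kS))
    (hWj : Wj = if jA then Yj else Xj) (hWk : Wk = if kA then Yk else Xk)
    (hXj : ¬jA → ¬jS → Xj = Yj) (hXk : ¬kA → ¬kS → Xk = Yk)
    (hzero : jA → kA → θjk = 0) :
    (if kA then θjk * Xj * (Xk - Yk) else 0) + (if jA then θjk * (Xj - Yj) * Xk else 0)
      + ((if jS ∨ kS then θjk * Wj * Wk else 0) - (if jS ∨ kS then θjk * Yj * Yk else 0))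
    = (if (jA ∨ jS) ∨ (kA ∨ kS) then θjk * Xj * Xk else 0)
      - (if (jA ∨ jS) ∨ (kA ∨ kS) then θjk * Yj * Yk else 0) := by
  by_cases hjA : jA <;> by_cases hjS : jS <;> by_cases hkA : kA <;> by_cases hkS : kS <;>
    simp_all <;> ring

lemma phase_sum (n : ℕ) (θ : Fin n → Fin n → ℝ)
    (hsym : ∀ j k, θ j k = θ k j)
    (A S : Finset (Fin n)) (hAS : Disjoint A S)
    (hzeroA : ∀ j ∈ A, ∀ k ∈ A, θ j k = 0)
    (x y : QIdx n) (hxy : ∀ j ∉ A ∪ S, x j = y j) :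
    (∑ k ∈ A, alphaAngle n θ k x * (bR (x k) - bR (y k)))
      + (ES n θ S (fun j => if j ∈ A then y j else x j) - ES n θ S y)
    = ES n θ (A ∪ S) x - ES n θ (A ∪ S) y := by
  set w : QIdx n := fun j => if j ∈ A then y j else x j with hw
  set U : ℝ := ∑ j, ∑ k, (if k ∈ A then θ j k * bR (x j) * (bR (x k) - bR (y k)) else 0) with hU
  set U' : ℝ := ∑ j, ∑ k, (if j ∈ A then θ j k * (bR (x j) - bR (y j)) * bR (x k) else 0) with hU'
  have hT1 : (∑ k ∈ A, alphaAngle n θ k x * (bR (x k) - bR (y k))) = U := by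
    have h1 : (∑ k ∈ A, alphaAngle n θ k x * (bR (x k) - bR (y k)))
        = ∑ k, if k ∈ A then ∑ j, θ j k * bR (x j) * (bR (x k) - bR (y k)) else 0 := by
      rw [Finset.sum_ite_mem, Finset.univ_inter]
      refine Finset.sum_congr rfl fun k _ => ?_
      rw [alphaAngle, Finset.sum_mul]
    rw [h1, hU, Finset.sum_comm]
    refine Finset.sum_congr rfl fun k _ => ?_
    by_cases h : k ∈ A <;> simp [h]
  have hUU' : U = U' := by
    rw [hU', Finset.sum_comm]
    refine Finset.sum_congr rfl fun a _ => Finset.sum_congr rfl fun b _ => ?_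
    by_cases h : b ∈ A <;> simp only [h, if_true, if_false]
    rw [hsym a b]; ring
  have hES : ∀ (T : Finset (Fin n)) (z z' : QIdx n), ES n θ T z - ES n θ T z'
      = (1/2) * ∑ j, ∑ k, ((if j ∈ T ∨ k ∈ T then θ j k * bR (z j) * bR (z k) else 0)
        - (if j ∈ T ∨ k ∈ T then θ j k * bR (z' j) * bR (z' k) else 0)) := by
    intro T z z'
    rw [ES, ES, ← mul_sub, ← Finset.sum_sub_distrib]
    congr 1
    refine Finset.sum_congr rfl fun j _ => ?_
    rw [← Finset.sum_sub_distrib]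
  have hkey : U + U' + (∑ j, ∑ k, ((if j ∈ S ∨ k ∈ S then θ j k * bR (w j) * bR (w k) else 0)
        - (if j ∈ S ∨ k ∈ S then θ j k * bR (y j) * bR (y k) else 0)))
      = ∑ j, ∑ k, ((if j ∈ A ∪ S ∨ k ∈ A ∪ S then θ j k * bR (x j) * bR (x k) else 0)
        - (if j ∈ A ∪ S ∨ k ∈ A ∪ S then θ j k * bR (y j) * bR (y k) else 0)) := by
    rw [hU, hU', ← Finset.sum_add_distrib, ← Finset.sum_add_distrib]
    refine Finset.sum_congr rfl fun j _ => ?_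
    rw [← Finset.sum_add_distrib, ← Finset.sum_add_distrib]
    refine Finset.sum_congr rfl fun k _ => ?_
    simp only [Finset.mem_union]
    refine pt_id (θ j k) (bR (x j)) (bR (x k)) (bR (y j)) (bR (y k)) (bR (w j)) (bR (w k))
      (j ∈ A) (j ∈ S) (k ∈ A) (k ∈ S) ?_ ?_ ?_ ?_ ?_ ?_ ?_
    · rintro ⟨h1, h2⟩; exact (Finset.disjoint_left.mp hAS h1) h2
    · rintro ⟨h1, h2⟩; exact (Finset.disjoint_left.mp hAS h1) h2
    · rw [hw]; simp only; rw [apply_ite bR]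
    · rw [hw]; simp only; rw [apply_ite bR]
    · intro h1 h2; rw [hxy j (by simp [h1, h2])]
    · intro h1 h2; rw [hxy k (by simp [h1, h2])]
    · intro h1 h2; exact hzeroA j h1 k h2
  rw [hT1, hES S w y, hES (A ∪ S) x y]
  rw [hUU'] at hT1 ⊢
  linarith [hkey]

lemma phase_prod (n : ℕ) (θ : Fin n → Fin n → ℝ) (A : Finset (Fin n)) (x y : QIdx n) :
    ∏ k ∈ A, phaseFac (alphaAngle n θ k x) (x k) (y k)
      = (1/2 : ℂ) ^ A.card *
        Complex.exp (Complex.I *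
          ((∑ k ∈ A, alphaAngle n θ k x * (bR (x k) - bR (y k)) : ℝ) : ℂ)) := by
  simp only [phaseFac]
  rw [Finset.prod_mul_distrib, Finset.prod_const, ← Complex.exp_sum]
  congr 1
  rw [Complex.ofReal_sum, Finset.mul_sum]

lemma Mform_empty (n : ℕ) (θ : Fin n → Fin n → ℝ) : Mform n θ ∅ = 1 := by
  ext x y
  simp only [Mform, Matrix.of_apply, Finset.notMem_empty, not_false_iff, forall_true_left,
    Finset.card_empty, pow_zero, one_mul, Matrix.one_apply]
  by_cases h : x = y
  · subst h; simp
  · rw [if_neg, if_neg h]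
    intro hall
    exact h (funext fun j => hall j)

lemma step_lemma (n : ℕ) (θ : Fin n → Fin n → ℝ)
    (hsym : ∀ j k, θ j k = θ k j)
    (A S : Finset (Fin n)) (hAS : Disjoint A S)
    (hzeroA : ∀ j ∈ A, ∀ k ∈ A, θ j k = 0) :
    Pop n θ A * Mform n θ S = Mform n θ (A ∪ S) := by
  ext x y
  rw [Matrix.mul_apply]
  by_cases hxy : ∀ j ∉ A ∪ S, x j = y j
  · set w₀ : QIdx n := fun j => if j ∈ A then y j else x j with hw₀
    rw [Finset.sum_eq_single_of_mem w₀ (Finset.mem_univ _)]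
    · have hP : Pop n θ A x w₀ = ∏ k ∈ A, phaseFac (alphaAngle n θ k x) (x k) (y k) := by
        rw [Pop, Matrix.of_apply, if_pos]
        · refine Finset.prod_congr rfl fun k hk => ?_
          rw [hw₀]; simp only [hk, if_pos]
        · intro j hj; rw [hw₀]; simp [hj]
      have hM : Mform n θ S w₀ y = (1/2 : ℂ) ^ S.card *
          Complex.exp (Complex.I * ((ES n θ S w₀ - ES n θ S y : ℝ) : ℂ)) := by
        rw [Mform, Matrix.of_apply, if_pos]
        intro j hjS
        rw [hw₀]
        by_cases hjA : j ∈ A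
        · simp [hjA]
        · simp only [hjA, if_neg, if_false]
          exact hxy j (by simp [hjA, hjS])
      rw [hP, hM, phase_prod, Mform, Matrix.of_apply, if_pos hxy,
        Finset.card_union_of_disjoint hAS, pow_add]
      rw [mul_mul_mul_comm, ← Complex.exp_add, ← mul_add, ← Complex.ofReal_add,
        phase_sum n θ hsym A S hAS hzeroA x y hxy]
    · intro w _ hne
      by_cases hPw : ∀ j ∉ A, x j = w j
      · have : ¬ ∀ j ∉ S, w j = y j := by
          intro hall
          apply hne
          funext j
          by_cases hj : j ∈ A
          · rw [hw₀]; simp only [hj, if_pos]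
            exact hall j (Finset.disjoint_left.mp hAS hj)
          · rw [hw₀]; simp only [hj, if_neg, if_false]
            exact (hPw j hj).symm
        rw [Mform, Matrix.of_apply, if_neg this, mul_zero]
      · rw [Pop, Matrix.of_apply, if_neg hPw, zero_mul]
  · have hR : Mform n θ (A ∪ S) x y = 0 := by rw [Mform, Matrix.of_apply, if_neg hxy]
    rw [hR]
    refine Finset.sum_eq_zero fun w _ => ?_
    by_cases hPw : ∀ j ∉ A, x j = w j
    · have : ¬ ∀ j ∉ S, w j = y j := by
        intro hall
        apply hxy
        intro j hj
        simp only [Finset.mem_union, not_or] at hj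
        rw [hPw j hj.1, hall j hj.2]
      rw [Mform, Matrix.of_apply, if_neg this, mul_zero]
    · rw [Pop, Matrix.of_apply, if_neg hPw, zero_mul]

lemma mem_foldr_union {n m : ℕ} (A : Fin m → Finset (Fin n)) :
    ∀ (L : List (Fin m)) (j : Fin n),
      j ∈ L.foldr (fun l s => A l ∪ s) ∅ ↔ ∃ l ∈ L, j ∈ A l
  | [], j => by simp
  | l :: L, j => by
      simp [List.foldr_cons, Finset.mem_union, mem_foldr_union A L j]

lemma prod_list_eq_Mform {n m : ℕ} (θ : Fin n → Fin n → ℝ)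
    (hsym : ∀ j k, θ j k = θ k j)
    (A : Fin m → Finset (Fin n))
    (hdisj : ∀ l l', l ≠ l' → Disjoint (A l) (A l'))
    (hzero : ∀ l, ∀ j ∈ A l, ∀ k ∈ A l, θ j k = 0) :
    ∀ (L : List (Fin m)), L.Nodup →
      ((L.map fun l => Pop n θ (A l)).prod) = Mform n θ (L.foldr (fun l s => A l ∪ s) ∅)
  | [], _ => by simp [Mform_empty]
  | l :: L, hnd => by
      have hndL := (List.nodup_cons.mp hnd).2
      have hlL := (List.nodup_cons.mp hnd).1
      rw [List.map_cons, List.prod_cons,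
        prod_list_eq_Mform θ hsym A hdisj hzero L hndL]
      rw [List.foldr_cons]
      refine step_lemma n θ hsym (A l) _ ?_ (hzero l)
      rw [Finset.disjoint_left]
      intro j hj hj'
      obtain ⟨l', hl', hjl'⟩ := (mem_foldr_union A L j).mp hj'
      have : l ≠ l' := fun h => hlL (h ▸ hl')
      exact Finset.disjoint_left.mp (hdisj l l' this) hj hjl'

lemma Mform_univ (n : ℕ) (θ : Fin n → Fin n → ℝ) :
    Mform n θ Finset.univ = gProj n θ := by
  ext x y
  have hcond : ∀ j ∉ (Finset.univ : Finset (Fin n)), x j = y j := by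
    intro j hj; exact absurd (Finset.mem_univ j) hj
  have hES : ∀ z : QIdx n,
      ES n θ Finset.univ z = (1 / 2 * ∑ j, ∑ k, θ j k * bR (z j) * bR (z k) : ℝ) := by
    intro z; simp [ES]
  rw [Mform, Matrix.of_apply, if_pos hcond, gProj, Matrix.vecMulVec_apply, Pi.star_apply,
    gVec, gVec]
  have hstar : (star ((((Real.sqrt (2 ^ n))⁻¹ : ℝ) : ℂ) *
      Complex.exp (Complex.I * ((1 / 2 * ∑ j, ∑ k, θ j k * bR (y j) * bR (y k) : ℝ) : ℂ))) : ℂ)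
      = (((Real.sqrt (2 ^ n))⁻¹ : ℝ) : ℂ) *
        Complex.exp (-(Complex.I * ((1 / 2 * ∑ j, ∑ k, θ j k * bR (y j) * bR (y k) : ℝ) : ℂ))) := by
    rw [star_mul']
    congr 1
    · exact Complex.conj_ofReal _
    · rw [Complex.star_def, ← Complex.exp_conj, _root_.map_mul, Complex.conj_I, Complex.conj_ofReal, neg_mul]
  rw [hstar]
  have hhalf : ((1/2 : ℂ)) ^ (Finset.univ : Finset (Fin n)).card
      = (((Real.sqrt (2 ^ n))⁻¹ : ℝ) : ℂ) * (((Real.sqrt (2 ^ n))⁻¹ : ℝ) : ℂ) := by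
    rw [← Complex.ofReal_mul, ← mul_inv, Real.mul_self_sqrt (by positivity)]
    rw [Finset.card_univ, Fintype.card_fin]
    push_cast
    rw [one_div, inv_pow]
  rw [hhalf, hES x, hES y]
  rw [mul_mul_mul_comm, ← Complex.exp_add]
  congr 2
  push_cast
  ring


/-- The product of the `m` test projections equals the rank-one projection onto `|G⟩`:
`∏_{l=1}^m P_l = |G⟩⟨G|`. -/
theorem prod_Pop_eq_gProj
    (n m : ℕ) (hn : 1 ≤ n) (hm : 1 ≤ m)
    (G : SimpleGraph (Fin n)) (θ : Fin n → Fin n → ℝ)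
    (hsym : ∀ j k, θ j k = θ k j)
    (hθ : ∀ j k, ¬ G.Adj j k → θ j k = 0)
    (A : Fin m → Finset (Fin n))
    (hdisj : ∀ l l', l ≠ l' → Disjoint (A l) (A l'))
    (hcover : ∀ v : Fin n, ∃ l, v ∈ A l)
    (hne : ∀ l, (A l).Nonempty)
    (hind : ∀ l, ∀ j ∈ A l, ∀ k ∈ A l, ¬ G.Adj j k)
    :
    ((List.finRange m).map fun l => Pop n θ (A l)).prod = gProj n θ := by
  have hzero : ∀ l, ∀ j ∈ A l, ∀ k ∈ A l, θ j k = 0 :=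
    fun l j hj k hk => hθ j k (hind l j hj k hk)
  rw [prod_list_eq_Mform θ hsym A hdisj hzero (List.finRange m) (List.nodup_finRange m)]
  have huniv : (List.finRange m).foldr (fun l s => A l ∪ s) ∅ = Finset.univ := by
    apply Finset.eq_univ_iff_forall.mpr
    intro v
    obtain ⟨l, hl⟩ := hcover v
    exact (mem_foldr_union A (List.finRange m) v).mpr ⟨l, List.mem_finRange l, hl⟩
  rw [huniv, Mform_univ]

end
end

section
/- The operator norm of the difference between the test operator and the target projection satisfies ‖Ω(𝒜) − |G⟩⟨G|‖ = (m−1)/m; equivalently, the spectral gap of Ω(𝒜) is ν(Ω(𝒜)) = 1/m. -/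
open scoped BigOperators ComplexOrder
open Matrix Complex

noncomputable section

/-!
The columns `Z^a |G⟩` (`a ∈ {0,1}^n`) of `graphBasis` form an orthonormal basis. Because `A_l`
is independent, the phase of `|G⟩` is affine in the bits on `A_l` with slopes `α_k`, and one
finds `P_l = ∑_{a|A_l = 0} |G_a⟩⟨G_a|`. Hence `Ω(𝒜) - |G⟩⟨G|` is diagonal in this basis with
eigenvalue `#{l | a|A_l = 0} / m - [a = 0]` at `a`. A nonzero `a` is nonzero on some block since
the blocks cover `V`, so these eigenvalues lie in `[0, (m-1)/m]`; since the blocks are disjoint,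
`a` supported on a single vertex attains `(m-1)/m`.
-/

open scoped Matrix.Norms.L2Operator
open Finset

lemma opNorm_mul_diagonal_mul_conjTranspose {ι : Type*} [Fintype ι] [DecidableEq ι]
    {U : Matrix ι ι ℂ} (hU : U ∈ unitary (Matrix ι ι ℂ)) (d : ι → ℂ) :
    opNorm (U * diagonal d * Uᴴ) = ‖d‖ := by
  rw [opNorm, ← cstar_norm_def, ← star_eq_conjTranspose,
    CStarRing.norm_mul_mem_unitary _ (Unitary.star_mem hU), CStarRing.norm_mem_unitary_mul _ hU,
    l2_opNorm_diagonal]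

section VanishingBlocks

variable {ι V M : Type*} [Fintype ι] [Zero M] [DecidableEq M]

def vanishingBlocks (A : ι → Finset V) (a : V → M) : Finset ι := {l | ∀ k ∈ A l, a k = 0}

lemma vanishingBlocks_zero (A : ι → Finset V) : vanishingBlocks A (0 : V → M) = univ :=
  filter_true_of_mem fun _ _ _ _ => rfl

lemma card_vanishingBlocks_lt {A : ι → Finset V} (hcover : ∀ v, ∃ l, v ∈ A l) {a : V → M}
    (ha : a ≠ 0) : #(vanishingBlocks A a) < Fintype.card ι := by
  obtain ⟨v, hv⟩ := Function.ne_iff.mp ha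
  obtain ⟨l, hl⟩ := hcover v
  exact card_lt_card (filter_ssubset.mpr ⟨l, mem_univ l, fun h => hv (h v hl)⟩)

lemma vanishingBlocks_single [DecidableEq ι] [DecidableEq V] {A : ι → Finset V}
    (hdisj : ∀ l l', l ≠ l' → Disjoint (A l) (A l')) {v : V} {l₀ : ι} (hv : v ∈ A l₀)
    {b : M} (hb : b ≠ 0) : vanishingBlocks A (Pi.single v b) = univ.erase l₀ := by
  ext l
  simp only [vanishingBlocks, mem_filter, mem_univ, true_and, mem_erase, and_true]
  constructor
  · rintro h rfl
    simpa [hb] using h v hv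
  · intro hl k hk
    have hkv : k ≠ v := fun hkv => disjoint_left.mp (hdisj l l₀ hl) (hkv ▸ hk) hv
    simp [hkv]

end VanishingBlocks

lemma norm_card_vanishingBlocks_div_sub_single {ι V : Type*} [Fintype ι] [Fintype V]
    [DecidableEq ι] [DecidableEq V] [Nonempty V] {A : ι → Finset V}
    (hdisj : ∀ l l', l ≠ l' → Disjoint (A l) (A l')) (hcover : ∀ v, ∃ l, v ∈ A l) :
    ‖fun a : V → Fin 2 => (#(vanishingBlocks A a) : ℂ) / Fintype.card ι -
      (Pi.single 0 1 : (V → Fin 2) → ℂ) a‖ =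
      ((Fintype.card ι : ℝ) - 1) / Fintype.card ι := by
  set N := Fintype.card ι
  set d := fun a : V → Fin 2 => (#(vanishingBlocks A a) : ℂ) / N - (Pi.single 0 1 : _ → ℂ) a
  obtain ⟨v⟩ := ‹Nonempty V›
  obtain ⟨l₀, hl₀⟩ := hcover v
  have hN : (1 : ℝ) ≤ N := by exact_mod_cast Fintype.card_pos_iff.mpr ⟨l₀⟩
  have hc : 0 ≤ ((N : ℝ) - 1) / N := by
    apply div_nonneg <;> linarith
  refine le_antisymm ((pi_norm_le_iff_of_nonneg hc).mpr fun a => ?_) ?_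
  · by_cases ha : a = 0
    · have hN0 : (N : ℂ) ≠ 0 := by exact_mod_cast (by linarith : (N : ℝ) ≠ 0)
      simp [d, ha, vanishingBlocks_zero, hc, hN0, N]
    · have hlt : (#(vanishingBlocks A a) : ℝ) + 1 ≤ N := by
        exact_mod_cast card_vanishingBlocks_lt hcover ha
      simp only [d]
      rw [Pi.single_apply, if_neg ha, sub_zero, norm_div, Complex.norm_natCast,
        Complex.norm_natCast]
      gcongr
      linarith
  · have hsingle : (Pi.single v (1 : Fin 2) : V → Fin 2) ≠ 0 := by simp
    calc ((N : ℝ) - 1) / N = ‖d (Pi.single v 1)‖ := by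
          simp only [d]
          rw [vanishingBlocks_single hdisj hl₀ one_ne_zero, Pi.single_apply, if_neg hsingle,
            sub_zero, card_erase_of_mem (mem_univ _), card_univ, norm_div, Complex.norm_natCast,
            Complex.norm_natCast, Nat.cast_sub (by exact_mod_cast hN), Nat.cast_one]
      _ ≤ ‖d‖ := norm_le_pi_norm d _

def signChar (t s : Fin 2) : ℂ := (-1) ^ ((t : ℕ) * s)

lemma sum_mask_mul_signChar_mul_signChar (p : Prop) [Decidable p] (s s' : Fin 2) :
    ∑ t, (if p → t = 0 then 1 else 0) * (signChar t s * signChar t s') =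
      if p then 1 else if s = s' then 2 else 0 := by
  by_cases hp : p <;> fin_cases s <;> fin_cases s' <;>
    norm_num [hp, signChar, Fin.sum_univ_two]

lemma prod_ite_mem_ite_eq {ι : Type*} [Fintype ι] [DecidableEq ι] (A : Finset ι)
    (x y : ι → Fin 2) :
    ∏ j, (if j ∈ A then (1 : ℂ) else if x j = y j then 2 else 0) =
      if ∀ j ∉ A, x j = y j then 2 ^ #Aᶜ else 0 := by
  rw [← prod_mul_prod_compl A, prod_congr rfl fun j hj => if_pos hj, prod_const_one, one_mul,
    prod_congr rfl fun j hj => if_neg (mem_compl.mp hj), prod_ite_zero, prod_const]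
  simp only [mem_compl]

def graphPhase (n : ℕ) (θ : Fin n → Fin n → ℝ) (z : QIdx n) : ℝ :=
  1 / 2 * ∑ j, ∑ k, θ j k * bR (z j) * bR (z k)

lemma gVec_mul_star_gVec (n : ℕ) (θ : Fin n → Fin n → ℝ) (x y : QIdx n) :
    gVec n θ x * star (gVec n θ y) =
      ((2 : ℂ) ^ n)⁻¹ *
        Complex.exp (Complex.I * ((graphPhase n θ x - graphPhase n θ y : ℝ) : ℂ)) := by
  have hsq : ((Real.sqrt (2 ^ n))⁻¹ * (Real.sqrt (2 ^ n))⁻¹ : ℝ) = ((2 : ℝ) ^ n)⁻¹ := by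
    rw [← mul_inv, Real.mul_self_sqrt (by positivity)]
  simp only [gVec, Complex.star_def, map_mul, Complex.conj_ofReal, ← Complex.exp_conj,
    Complex.conj_I]
  rw [mul_mul_mul_comm, ← Complex.ofReal_mul, hsq, ← Complex.exp_add]
  push_cast [graphPhase]
  ring_nf

lemma gVec_mul_star_gVec_self (n : ℕ) (θ : Fin n → Fin n → ℝ) (x : QIdx n) :
    gVec n θ x * star (gVec n θ x) = ((2 : ℂ) ^ n)⁻¹ := by
  rw [gVec_mul_star_gVec, sub_self]
  simp

lemma graphPhase_sub_graphPhase {n : ℕ} {θ : Fin n → Fin n → ℝ}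
    (hsym : ∀ j k, θ j k = θ k j) {A : Finset (Fin n)} (hA : ∀ j ∈ A, ∀ k ∈ A, θ j k = 0)
    {x y : QIdx n} (hxy : ∀ j ∉ A, x j = y j) :
    graphPhase n θ x - graphPhase n θ y =
      ∑ k ∈ A, alphaAngle n θ k x * (bR (x k) - bR (y k)) := by
  set δ : Fin n → ℝ := fun j => bR (x j) - bR (y j)
  have hδ : ∀ j ∉ A, δ j = 0 := fun j hj => by simp [δ, hxy j hj]
  have hy : ∀ j, bR (y j) = bR (x j) - δ j := fun j => by simp [δ]
  have hδδ : ∑ j, ∑ k, θ j k * δ j * δ k = 0 := by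
    refine sum_eq_zero fun j _ => sum_eq_zero fun k _ => ?_
    by_cases hj : j ∈ A
    · by_cases hk : k ∈ A
      · simp [hA j hj k hk]
      · simp [hδ k hk]
    · simp [hδ j hj]
  have hswap : ∑ j, ∑ k, θ j k * δ j * bR (x k) = ∑ j, ∑ k, θ j k * bR (x j) * δ k := by
    rw [sum_comm]
    exact sum_congr rfl fun j _ => sum_congr rfl fun k _ => by rw [hsym]; ring
  calc graphPhase n θ x - graphPhase n θ y
      = 1 / 2 * ((∑ j, ∑ k, θ j k * bR (x j) * δ k) + (∑ j, ∑ k, θ j k * δ j * bR (x k))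
          - ∑ j, ∑ k, θ j k * δ j * δ k) := by
        simp only [graphPhase, hy, ← sum_add_distrib, ← sum_sub_distrib, ← mul_sub]
        congr 1
        exact sum_congr rfl fun j _ => sum_congr rfl fun k _ => by ring
    _ = ∑ j, ∑ k, θ j k * bR (x j) * δ k := by rw [hswap, hδδ]; ring
    _ = ∑ k, alphaAngle n θ k x * δ k := by rw [sum_comm]; simp only [alphaAngle, sum_mul]
    _ = ∑ k ∈ A, alphaAngle n θ k x * δ k :=
        (sum_subset (subset_univ A) fun k _ hk => by rw [hδ k hk, mul_zero]).symm

def graphBasis (n : ℕ) (θ : Fin n → Fin n → ℝ) : QOp n :=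
  Matrix.of fun z a => gVec n θ z * ∏ j, signChar (a j) (z j)

lemma graphBasis_mul_diagonal_mul_conjTranspose_apply (n : ℕ) (θ : Fin n → Fin n → ℝ)
    (A : Finset (Fin n)) (x y : QIdx n) :
    (graphBasis n θ * diagonal (fun a : QIdx n => if ∀ k ∈ A, a k = 0 then (1 : ℂ) else 0) *
        (graphBasis n θ)ᴴ) x y =
      gVec n θ x * star (gVec n θ y) * if ∀ j ∉ A, x j = y j then 2 ^ #Aᶜ else 0 := by
  have hmask : ∀ a : QIdx n, (if ∀ k ∈ A, a k = 0 then (1 : ℂ) else 0) =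
      ∏ j, if j ∈ A → a j = 0 then 1 else 0 := fun a => by
    rw [prod_boole]; simp
  have hsign : ∀ t s : Fin 2, star (signChar t s) = signChar t s := fun t s => by
    simp [signChar]
  calc (graphBasis n θ * diagonal (fun a : QIdx n => if ∀ k ∈ A, a k = 0 then (1 : ℂ) else 0) *
        (graphBasis n θ)ᴴ) x y
      = gVec n θ x * star (gVec n θ y) * ∑ a : QIdx n, ∏ j,
          (if j ∈ A → a j = 0 then 1 else 0) * (signChar (a j) (x j) * signChar (a j) (y j)) := by
        rw [mul_apply]
        simp only [mul_diagonal, conjTranspose_apply, graphBasis, of_apply, star_mul',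
          star_prod, hsign, hmask, mul_sum, prod_mul_distrib]
        exact sum_congr rfl fun a _ => by ring
    _ = gVec n θ x * star (gVec n θ y) *
          ∏ j, (if j ∈ A then (1 : ℂ) else if x j = y j then 2 else 0) := by
        rw [← Fintype.prod_sum fun j t =>
          (if j ∈ A → t = 0 then (1 : ℂ) else 0) * (signChar t (x j) * signChar t (y j))]
        simp only [sum_mask_mul_signChar_mul_signChar]
    _ = _ := by rw [prod_ite_mem_ite_eq]; congr

lemma graphBasis_mem_unitary (n : ℕ) (θ : Fin n → Fin n → ℝ) :
    graphBasis n θ ∈ unitary (QOp n) := by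
  rw [← unitaryGroup, mem_unitaryGroup_iff, star_eq_conjTranspose]
  ext x y
  have h := graphBasis_mul_diagonal_mul_conjTranspose_apply n θ ∅ x y
  simp only [notMem_empty, IsEmpty.forall_iff, implies_true, ↓reduceIte, diagonal_one, mul_one,
    not_false_eq_true, forall_const, ← funext_iff, compl_empty, card_univ, Fintype.card_fin] at h
  rw [h, one_apply]
  split_ifs
  · rw [‹x = y›, gVec_mul_star_gVec_self, inv_mul_cancel₀ (by positivity)]
  · rw [mul_zero]

lemma gProj_eq_graphBasis_conj (n : ℕ) (θ : Fin n → Fin n → ℝ) :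
    gProj n θ = graphBasis n θ * diagonal (Pi.single 0 1) * (graphBasis n θ)ᴴ := by
  have hmask :
      (Pi.single 0 1 : QIdx n → ℂ) = fun a => if ∀ k ∈ univ, a k = 0 then 1 else 0 := by
    ext a
    simp [Pi.single_apply, funext_iff]
  ext x y
  rw [hmask, graphBasis_mul_diagonal_mul_conjTranspose_apply]
  simp [gProj, vecMulVec_apply]

lemma prod_phaseFac {ι : Type*} (s : Finset ι) (α : ι → ℝ) (b b' : ι → Fin 2) :
    ∏ k ∈ s, phaseFac (α k) (b k) (b' k) =
      (1 / 2) ^ #s *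
        Complex.exp (Complex.I * ((∑ k ∈ s, α k * (bR (b k) - bR (b' k)) : ℝ) : ℂ)) := by
  simp only [phaseFac, prod_mul_distrib, prod_const, ← Complex.exp_sum, Complex.ofReal_sum,
    mul_sum]

lemma Pop_eq_graphBasis_conj {n : ℕ} {θ : Fin n → Fin n → ℝ} (hsym : ∀ j k, θ j k = θ k j)
    {A : Finset (Fin n)} (hA : ∀ j ∈ A, ∀ k ∈ A, θ j k = 0) :
    Pop n θ A = graphBasis n θ *
      diagonal (fun a : QIdx n => if ∀ k ∈ A, a k = 0 then 1 else 0) * (graphBasis n θ)ᴴ := by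
  ext x y
  rw [graphBasis_mul_diagonal_mul_conjTranspose_apply, Pop, of_apply]
  split_ifs with hxy
  · rw [prod_phaseFac, gVec_mul_star_gVec, graphPhase_sub_graphPhase hsym hA hxy, card_compl,
      Fintype.card_fin, pow_sub₀ _ two_ne_zero (card_le_univ A |>.trans_eq (Fintype.card_fin n)),
      one_div, inv_pow]
    field_simp
  · rw [mul_zero]

lemma OmegaA_eq_graphBasis_conj {n m : ℕ} {θ : Fin n → Fin n → ℝ}
    (hsym : ∀ j k, θ j k = θ k j) {A : Fin m → Finset (Fin n)}
    (hA : ∀ l, ∀ j ∈ A l, ∀ k ∈ A l, θ j k = 0) :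
    OmegaA n m θ A = graphBasis n θ *
      diagonal (fun a : QIdx n => (#(vanishingBlocks A a) : ℂ) / m) * (graphBasis n θ)ᴴ := by
  have hdiag : ∑ l, diagonal (fun a : QIdx n => if ∀ k ∈ A l, a k = 0 then (1 : ℂ) else 0) =
      diagonal (fun a => (#(vanishingBlocks A a) : ℂ)) := by
    ext a b
    by_cases hab : a = b
    · simp only [hab, Matrix.sum_apply, diagonal_apply_eq, sum_boole, vanishingBlocks,
        Nat.cast_inj]
      congr
    · simp [hab, Matrix.sum_apply]
  rw [OmegaA, sum_congr rfl fun l _ => Pop_eq_graphBasis_conj hsym (hA l), ← sum_mul, ← mul_sum,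
    hdiag, ← smul_mul_assoc, ← mul_smul_comm, ← diagonal_smul]
  simp only [Pi.smul_def, smul_eq_mul, inv_mul_eq_div]

theorem opNorm_OmegaA_sub_gProj_general
    (n m : ℕ) (hn : 1 ≤ n)
    (G : SimpleGraph (Fin n)) (θ : Fin n → Fin n → ℝ)
    (hsym : ∀ j k, θ j k = θ k j)
    (hθ : ∀ j k, ¬ G.Adj j k → θ j k = 0)
    (A : Fin m → Finset (Fin n))
    (hdisj : ∀ l l', l ≠ l' → Disjoint (A l) (A l'))
    (hcover : ∀ v : Fin n, ∃ l, v ∈ A l)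
    (hind : ∀ l, ∀ j ∈ A l, ∀ k ∈ A l, ¬ G.Adj j k)
    :
    opNorm (OmegaA n m θ A - gProj n θ) = ((m : ℝ) - 1) / m ∧
    1 - opNorm (OmegaA n m θ A - gProj n θ) = 1 / (m : ℝ) := by
  have : Nonempty (Fin n) := ⟨⟨0, hn⟩⟩
  obtain ⟨l, -⟩ := hcover ⟨0, hn⟩
  have hm : (m : ℝ) ≠ 0 := by exact_mod_cast l.pos.ne'
  have hθA : ∀ l, ∀ j ∈ A l, ∀ k ∈ A l, θ j k = 0 :=
    fun l j hj k hk => hθ j k (hind l j hj k hk)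
  have hnorm : opNorm (OmegaA n m θ A - gProj n θ) = ((m : ℝ) - 1) / m := by
    rw [OmegaA_eq_graphBasis_conj hsym hθA, gProj_eq_graphBasis_conj, ← sub_mul, ← mul_sub,
      diagonal_sub, opNorm_mul_diagonal_mul_conjTranspose (graphBasis_mem_unitary n θ)]
    simpa using norm_card_vanishingBlocks_div_sub_single hdisj hcover
  refine ⟨hnorm, ?_⟩
  rw [hnorm]
  field_simp
  ring

/-- `‖Ω(𝒜) - |G⟩⟨G|‖ = (m-1)/m`, equivalently the spectral gap is `ν(Ω(𝒜)) = 1/m`. -/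
theorem opNorm_OmegaA_sub_gProj
    (n m : ℕ) (hn : 1 ≤ n) (hm : 1 ≤ m)
    (G : SimpleGraph (Fin n)) (θ : Fin n → Fin n → ℝ)
    (hsym : ∀ j k, θ j k = θ k j)
    (hθ : ∀ j k, ¬ G.Adj j k → θ j k = 0)
    (A : Fin m → Finset (Fin n))
    (hdisj : ∀ l l', l ≠ l' → Disjoint (A l) (A l'))
    (hcover : ∀ v : Fin n, ∃ l, v ∈ A l)
    (hne : ∀ l, (A l).Nonempty)
    (hind : ∀ l, ∀ j ∈ A l, ∀ k ∈ A l, ¬ G.Adj j k)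
    :
    opNorm (OmegaA n m θ A - gProj n θ) = ((m : ℝ) - 1) / m ∧
    1 - opNorm (OmegaA n m θ A - gProj n θ) = 1 / (m : ℝ) :=
  opNorm_OmegaA_sub_gProj_general n m hn G θ hsym hθ A hdisj hcover hind

end
end

section
/- The discretized test operator is almost passed by the weighted graph state: ⟨G|Ω_h(𝒜)|G⟩ ≥ (1 − sin²(π/(4h)))^{max_{1≤l≤m} |A_l|}. -/
open scoped BigOperators ComplexOrder
open Matrix Complex

noncomputable section

/-! Fix a set `A` of the independence cover. Because `θ` vanishes on `A × A`, the amplitudes of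
`|G⟩` at two strings `x, y` agreeing off `A` differ by the phase
`∏_{k ∈ A} e^{i α_k(x) (y_k - x_k)}`, and `α_k(x)` only depends on `x` off `A`. This phase combines
with the entries of `P_{A;h}` into the projection onto `|α_k^h - α_k⟩` on each site of `A`, so
summing over the strings on `A` gives
`⟨G|P_{A;h}|G⟩ = 2^{-n} ∑_z ∏_{k ∈ A} (1 + cos (α_k^h(z) - α_k(z))) / 2`. Since
`|α^h - α| ≤ π/(2h)`, each factor `cos² ((α^h - α)/2)` is at least `cos² (π/(4h))`, and averaging
over the sets of the cover gives the bound. -/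

theorem Fintype.sum_agreeOff_prod {ι β R : Type*} [Fintype ι] [DecidableEq ι] [Fintype β]
    [CommSemiring R] (A : Finset ι)
    [DecidableRel fun x y : ι → β => ∀ j ∉ A, x j = y j] (x : ι → β) (f : ι → β → R) :
    ∑ y : ι → β, (if ∀ j ∉ A, x j = y j then ∏ k ∈ A, f k (y k) else 0) =
      ∏ k ∈ A, ∑ b, f k b := by
  set t : ∀ k, Finset β := fun k => if k ∈ A then Finset.univ else {x k}
  set g : ι → β → R := fun k b => if k ∈ A then f k b else 1
  have mem_t : ∀ y : ι → β, (∀ j ∉ A, x j = y j) ↔ ∀ k, y k ∈ t k := fun y =>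
    forall_congr' fun k => by by_cases hk : k ∈ A <;> simp [t, hk, eq_comm]
  calc ∑ y : ι → β, (if ∀ j ∉ A, x j = y j then ∏ k ∈ A, f k (y k) else 0)
      = ∑ y ∈ Fintype.piFinset t, ∏ k, g k (y k) := by
        rw [← Finset.sum_filter]
        refine Finset.sum_congr (by ext y; simp [mem_t]) fun y _ => ?_
        rw [← Finset.prod_subset (Finset.subset_univ A) fun k _ hk => if_neg hk]
        exact Finset.prod_congr rfl fun k hk => (if_pos hk).symm
    _ = ∏ k, ∑ b ∈ t k, g k b := (Finset.prod_univ_sum t g).symm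
    _ = ∏ k ∈ A, ∑ b, f k b := by
        rw [← Finset.prod_subset (Finset.subset_univ A) fun k _ hk => by simp [t, g, hk]]
        exact Finset.prod_congr rfl fun k hk => by simp [t, g, hk]

theorem Fintype.card_pow_mul_sum_eq_sum_agreeOff {ι β R : Type*} [Fintype ι] [DecidableEq ι]
    [Fintype β] [CommSemiring R] (A : Finset ι)
    [DecidableRel fun x y : ι → β => ∀ j ∉ A, x j = y j] (Φ : (ι → β) → R) :
    (Fintype.card β : R) ^ A.card * ∑ x, Φ x =
      ∑ w : ι → β, ∑ x : ι → β, if ∀ j ∉ A, w j = x j then Φ x else 0 := by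
  have count : ∀ x : ι → β,
      ∑ w : ι → β, (if ∀ j ∉ A, x j = w j then ∏ _k ∈ A, (1 : R) else 0) =
        (Fintype.card β : R) ^ A.card := fun x => by
    rw [Fintype.sum_agreeOff_prod A x fun _ _ => 1]; simp
  rw [Finset.sum_comm, Finset.mul_sum]
  refine Finset.sum_congr rfl fun x _ => ?_
  rw [← count x, Finset.sum_mul]
  refine Finset.sum_congr rfl fun w _ => ?_
  simp only [Finset.prod_const_one, ite_mul, one_mul, zero_mul, eq_comm]

lemma quadForm_sub_of_eqOn_compl {ι : Type*} [Fintype ι] (θ : ι → ι → ℝ)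
    (hsym : ∀ j k, θ j k = θ k j) (A : Finset ι) (hA : ∀ j ∈ A, ∀ k ∈ A, θ j k = 0)
    (u v : ι → ℝ) (huv : ∀ j ∉ A, u j = v j) :
    1 / 2 * ∑ j, ∑ k, θ j k * v j * v k - 1 / 2 * ∑ j, ∑ k, θ j k * u j * u k =
      ∑ k ∈ A, (∑ j, θ j k * u j) * (v k - u k) := by
  have hd : ∀ k ∉ A, v k - u k = 0 := fun k hk => by rw [huv k hk, sub_self]
  have pointwise : ∀ j k, θ j k * v j * v k - θ j k * u j * u k =
      θ j k * u j * (v k - u k) + θ k j * u k * (v j - u j) := fun j k => by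
    by_cases hj : j ∈ A
    · by_cases hk : k ∈ A
      · rw [hA j hj k hk, hA k hk j hj]; ring
      · rw [huv k hk, hsym k j]; ring
    · rw [huv j hj]; ring
  calc 1 / 2 * ∑ j, ∑ k, θ j k * v j * v k - 1 / 2 * ∑ j, ∑ k, θ j k * u j * u k
      = 1 / 2 * ∑ j, ∑ k, (θ j k * u j * (v k - u k) + θ k j * u k * (v j - u j)) := by
        rw [← mul_sub, ← Finset.sum_sub_distrib]
        simp only [← Finset.sum_sub_distrib, pointwise]
    _ = ∑ j, ∑ k, θ j k * u j * (v k - u k) := by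
        simp only [Finset.sum_add_distrib]
        rw [Finset.sum_comm (f := fun j k => θ k j * u k * (v j - u j))]
        ring
    _ = ∑ k, (∑ j, θ j k * u j) * (v k - u k) := by
        rw [Finset.sum_comm]; simp only [Finset.sum_mul]
    _ = ∑ k ∈ A, (∑ j, θ j k * u j) * (v k - u k) :=
        (Finset.sum_subset (Finset.subset_univ A) fun k _ hk => by rw [hd k hk, mul_zero]).symm

lemma two_mul_cos_sq_le_one_add_cos {t δ : ℝ} (ht : 2 * t ≤ Real.pi) (hδ : |δ| ≤ 2 * t) :
    2 * Real.cos t ^ 2 ≤ 1 + Real.cos δ := by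
  have hcos : Real.cos (2 * t) ≤ Real.cos |δ| :=
    Real.cos_le_cos_of_nonneg_of_le_pi (abs_nonneg δ) ht hδ
  rw [Real.cos_abs, Real.cos_two_mul] at hcos
  linarith

lemma abs_alphaH_sub_le (h : ℕ) (hh : 0 < h) (α : ℝ) :
    |alphaH h α - α| ≤ Real.pi / (2 * h) := by
  have hh' : (0 : ℝ) < h := by exact_mod_cast hh
  set j : ℤ := ⌊(h : ℝ) * α / Real.pi + 1 / 2⌋
  have hj : alphaH h α - α = (j - h * α / Real.pi) * (Real.pi / h) := by
    simp only [alphaH, j]; field_simp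
  have hlo : (j : ℝ) ≤ h * α / Real.pi + 1 / 2 := Int.floor_le _
  have hhi : h * α / Real.pi + 1 / 2 < j + 1 := Int.lt_floor_add_one _
  rw [hj, abs_mul, abs_of_pos (by positivity : 0 < Real.pi / h)]
  calc |(j : ℝ) - h * α / Real.pi| * (Real.pi / h) ≤ 1 / 2 * (Real.pi / h) := by
        gcongr; rw [abs_le]; constructor <;> linarith
    _ = Real.pi / (2 * h) := by ring

lemma bR_zero : bR 0 = 0 := by simp [bR]
lemma bR_one : bR 1 = 1 := by simp [bR]

lemma sum_sum_phaseFac (α : ℝ) :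
    ∑ b : Fin 2, ∑ b' : Fin 2, phaseFac α b b' = ((1 + Real.cos α : ℝ) : ℂ) := by
  simp only [Fin.sum_univ_two, phaseFac, bR_zero, bR_one]
  push_cast
  rw [Complex.cos]
  ring_nf
  rw [Complex.exp_zero]

lemma exp_mul_phaseFac (α β : ℝ) (b b' : Fin 2) :
    Complex.exp (Complex.I * ((α * (bR b' - bR b) : ℝ) : ℂ)) * phaseFac β b b' =
      phaseFac (β - α) b b' := by
  rw [phaseFac, phaseFac, mul_left_comm, ← Complex.exp_add]
  congr 3
  push_cast
  ring

lemma star_gVec_mul_gVec (n : ℕ) (θ : Fin n → Fin n → ℝ) (hsym : ∀ j k, θ j k = θ k j)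
    (A : Finset (Fin n)) (hA : ∀ j ∈ A, ∀ k ∈ A, θ j k = 0)
    {x y : QIdx n} (hxy : ∀ j ∉ A, x j = y j) :
    star (gVec n θ x) * gVec n θ y = ((((2 : ℝ) ^ n)⁻¹ : ℝ) : ℂ) *
      ∏ k ∈ A,
        Complex.exp (Complex.I * ((alphaAngle n θ k x * (bR (y k) - bR (x k)) : ℝ) : ℂ)) := by
  have hnorm : (((Real.sqrt (2 ^ n))⁻¹ : ℝ) : ℂ) * (((Real.sqrt (2 ^ n))⁻¹ : ℝ) : ℂ) =
      ((((2 : ℝ) ^ n)⁻¹ : ℝ) : ℂ) := by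
    rw [← Complex.ofReal_mul, ← mul_inv, Real.mul_self_sqrt (by positivity)]
  have hphase := quadForm_sub_of_eqOn_compl θ hsym A hA (fun j => bR (x j)) (fun j => bR (y j))
    fun j hj => by rw [hxy j hj]
  simp only [gVec, star_mul', Complex.star_def, Complex.conj_ofReal, ← Complex.exp_conj,
    map_mul, Complex.conj_I]
  rw [← Complex.exp_sum, ← Finset.mul_sum, ← Complex.ofReal_sum]
  unfold alphaAngle
  rw [← hphase, ← hnorm, Complex.ofReal_sub, mul_sub, Complex.exp_sub, neg_mul, Complex.exp_neg]
  ring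

lemma alphaAngle_eq_of_eqOn_compl (n : ℕ) (θ : Fin n → Fin n → ℝ) {A : Finset (Fin n)}
    (hA : ∀ j ∈ A, ∀ k ∈ A, θ j k = 0) {x y : QIdx n} (hxy : ∀ j ∉ A, x j = y j)
    {k : Fin n} (hk : k ∈ A) :
    alphaAngle n θ k x = alphaAngle n θ k y :=
  Finset.sum_congr rfl fun j _ => by
    by_cases hj : j ∈ A
    · rw [hA j hj k hk, zero_mul, zero_mul]
    · rw [hxy j hj]

lemma star_gVec_mul_PopH_mul_gVec (n : ℕ) (θ : Fin n → Fin n → ℝ)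
    (hsym : ∀ j k, θ j k = θ k j) (A : Finset (Fin n)) (hA : ∀ j ∈ A, ∀ k ∈ A, θ j k = 0)
    (h : ℕ) (x y : QIdx n) :
    star (gVec n θ x) * (PopH n θ h A x y * gVec n θ y) =
      ((((2 : ℝ) ^ n)⁻¹ : ℝ) : ℂ) * if ∀ j ∉ A, x j = y j then
        ∏ k ∈ A, phaseFac (alphaH h (alphaAngle n θ k x) - alphaAngle n θ k x) (x k) (y k)
      else 0 := by
  rw [PopH, Matrix.of_apply]
  split_ifs with hxy
  · rw [mul_left_comm, mul_comm, star_gVec_mul_gVec n θ hsym A hA hxy, mul_assoc,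
      ← Finset.prod_mul_distrib]
    simp only [exp_mul_phaseFac]
  · rw [zero_mul, mul_zero, mul_zero]

lemma quadForm_PopH (n : ℕ) (θ : Fin n → Fin n → ℝ) (hsym : ∀ j k, θ j k = θ k j)
    (A : Finset (Fin n)) (hA : ∀ j ∈ A, ∀ k ∈ A, θ j k = 0) (h : ℕ) :
    star (gVec n θ) ⬝ᵥ (PopH n θ h A *ᵥ gVec n θ) =
      ((((2 : ℝ) ^ n * 2 ^ A.card)⁻¹ * ∑ w : QIdx n, ∏ k ∈ A,
        (1 + Real.cos (alphaH h (alphaAngle n θ k w) - alphaAngle n θ k w)) : ℝ) : ℂ) := by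
  set δ : Fin n → QIdx n → ℝ := fun k x => alphaH h (alphaAngle n θ k x) - alphaAngle n θ k x
  set T : QIdx n → QIdx n → ℂ := fun x y =>
    if ∀ j ∉ A, x j = y j then ∏ k ∈ A, phaseFac (δ k x) (x k) (y k) else 0
  have expand : star (gVec n θ) ⬝ᵥ (PopH n θ h A *ᵥ gVec n θ) =
      ((((2 : ℝ) ^ n)⁻¹ : ℝ) : ℂ) * ∑ x, ∑ y, T x y := by
    simp only [dotProduct, mulVec, Pi.star_apply, Finset.mul_sum,
      star_gVec_mul_PopH_mul_gVec n θ hsym A hA h]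
    rfl
  have inner : ∀ w x : QIdx n, (∀ j ∉ A, w j = x j) →
      ∑ y, T x y = ∏ k ∈ A, ∑ b, phaseFac (δ k w) (x k) b := fun w x hwx => by
    rw [← Fintype.sum_agreeOff_prod A w]
    refine Finset.sum_congr rfl fun y _ => ?_
    have hδ : ∀ k ∈ A, δ k x = δ k w := fun k hk => by
      simp only [δ, alphaAngle_eq_of_eqOn_compl n θ hA hwx hk]
    exact if_congr (forall₂_congr fun j hj => by rw [hwx j hj])
      (Finset.prod_congr rfl fun k hk => by rw [hδ k hk]) rfl
  have outer : ∀ w : QIdx n, (∑ x, if ∀ j ∉ A, w j = x j then ∑ y, T x y else 0) =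
      ∏ k ∈ A, ((1 + Real.cos (δ k w) : ℝ) : ℂ) := fun w => by
    calc (∑ x, if ∀ j ∉ A, w j = x j then ∑ y, T x y else 0)
        = ∑ x, if ∀ j ∉ A, w j = x j then ∏ k ∈ A, ∑ b, phaseFac (δ k w) (x k) b else 0 :=
          Finset.sum_congr rfl fun x _ => by
            split_ifs with hwx
            exacts [inner w x hwx, rfl]
      _ = ∏ k ∈ A, ∑ b, ∑ b', phaseFac (δ k w) b b' :=
          Fintype.sum_agreeOff_prod A w fun k b => ∑ b', phaseFac (δ k w) b b'
      _ = ∏ k ∈ A, ((1 + Real.cos (δ k w) : ℝ) : ℂ) :=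
          Finset.prod_congr rfl fun k _ => sum_sum_phaseFac _
  -- Count each `x` once for each of the `2 ^ |A|` strings `w` agreeing with it off `A`.
  have count := Fintype.card_pow_mul_sum_eq_sum_agreeOff A (fun x => ∑ y, T x y)
  simp only [outer, ← Complex.ofReal_prod, ← Complex.ofReal_sum, Fintype.card_fin,
    Nat.cast_ofNat] at count
  rw [expand, (eq_inv_mul_iff_mul_eq₀ (by positivity)).2 count]
  simp only [δ]
  push_cast
  ring

lemma cos_sq_pow_card_le_re_quadForm_PopH (n : ℕ) (θ : Fin n → Fin n → ℝ)
    (hsym : ∀ j k, θ j k = θ k j) (A : Finset (Fin n)) (hA : ∀ j ∈ A, ∀ k ∈ A, θ j k = 0)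
    (h : ℕ) (hh : 0 < h) :
    (Real.cos (Real.pi / (4 * h)) ^ 2) ^ A.card ≤
      (star (gVec n θ) ⬝ᵥ (PopH n θ h A *ᵥ gVec n θ)).re := by
  have hh' : (1 : ℝ) ≤ h := by exact_mod_cast hh
  have factor : ∀ α : ℝ, 2 * Real.cos (Real.pi / (4 * h)) ^ 2 ≤ 1 + Real.cos (alphaH h α - α) :=
    fun α => two_mul_cos_sq_le_one_add_cos
      (by rw [mul_div_assoc', div_le_iff₀ (by positivity)]; nlinarith [Real.pi_pos])
      (by convert abs_alphaH_sub_le h hh α using 1; field_simp; ring)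
  rw [quadForm_PopH n θ hsym A hA h, Complex.ofReal_re]
  calc (Real.cos (Real.pi / (4 * h)) ^ 2) ^ A.card = ((2 : ℝ) ^ n * 2 ^ A.card)⁻¹ *
        ∑ _w : QIdx n, (2 * Real.cos (Real.pi / (4 * h)) ^ 2) ^ A.card := by
        rw [Finset.sum_const, Finset.card_univ, Fintype.card_fun, Fintype.card_fin,
          Fintype.card_fin, nsmul_eq_mul, mul_pow]
        push_cast
        field_simp
    _ ≤ _ := by
        gcongr with w
        rw [← Finset.prod_const]
        exact Finset.prod_le_prod (fun _ _ => by positivity) fun k _ => factor _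

lemma re_quadForm_OmegaAH (n m : ℕ) (θ : Fin n → Fin n → ℝ) (h : ℕ)
    (A : Fin m → Finset (Fin n)) :
    (star (gVec n θ) ⬝ᵥ (OmegaAH n m θ h A *ᵥ gVec n θ)).re =
      (m : ℝ)⁻¹ * ∑ l, (star (gVec n θ) ⬝ᵥ (PopH n θ h (A l) *ᵥ gVec n θ)).re := by
  rw [OmegaAH, Matrix.smul_mulVec, Matrix.sum_mulVec, dotProduct_smul, dotProduct_sum,
    smul_eq_mul, ← Complex.ofReal_natCast, ← Complex.ofReal_inv, Complex.re_ofReal_mul,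
    Complex.re_sum]

theorem gVec_OmegaAH_lower_bound_general
    (n m : ℕ) (hm : 1 ≤ m)
    (G : SimpleGraph (Fin n)) (θ : Fin n → Fin n → ℝ)
    (hsym : ∀ j k, θ j k = θ k j)
    (hθ : ∀ j k, ¬ G.Adj j k → θ j k = 0)
    (A : Fin m → Finset (Fin n))
    (hind : ∀ l, ∀ j ∈ A l, ∀ k ∈ A l, ¬ G.Adj j k)
    (h : ℕ) (hh : 1 ≤ h) :
    (1 - Real.sin (Real.pi / (4 * h)) ^ 2) ^ (Finset.univ.sup fun l => (A l).card) ≤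
      (star (gVec n θ) ⬝ᵥ (OmegaAH n m θ h A *ᵥ gVec n θ)).re := by
  rw [← Real.cos_sq', re_quadForm_OmegaAH]
  set c := Real.cos (Real.pi / (4 * h)) ^ 2
  set M := Finset.univ.sup fun l => (A l).card
  have hterm : ∀ l, c ^ M ≤ (star (gVec n θ) ⬝ᵥ (PopH n θ h (A l) *ᵥ gVec n θ)).re := fun l =>
    (pow_le_pow_of_le_one (sq_nonneg _) (Real.cos_sq_le_one _)
      (Finset.le_sup (f := fun l => (A l).card) (Finset.mem_univ l))).trans
      (cos_sq_pow_card_le_re_quadForm_PopH n θ hsym (A l)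
        (fun j hj k hk => hθ j k (hind l j hj k hk)) h hh)
  calc c ^ M = (m : ℝ)⁻¹ * ∑ _l : Fin m, c ^ M := by
        rw [Finset.sum_const, Finset.card_univ, Fintype.card_fin, nsmul_eq_mul,
          inv_mul_cancel_left₀ (by positivity)]
    _ ≤ _ := by gcongr with l; exact hterm l

/-- The discretized test operator is almost passed by the weighted graph state:
`⟨G|Ω_h(𝒜)|G⟩ ≥ (1 - sin²(π/4h))^{max_l |A_l|}`. -/
theorem gVec_OmegaAH_lower_bound
    (n m : ℕ) (hn : 1 ≤ n) (hm : 1 ≤ m)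
    (G : SimpleGraph (Fin n)) (θ : Fin n → Fin n → ℝ)
    (hsym : ∀ j k, θ j k = θ k j)
    (hθ : ∀ j k, ¬ G.Adj j k → θ j k = 0)
    (A : Fin m → Finset (Fin n))
    (hdisj : ∀ l l', l ≠ l' → Disjoint (A l) (A l'))
    (hcover : ∀ v : Fin n, ∃ l, v ∈ A l)
    (hne : ∀ l, (A l).Nonempty)
    (hind : ∀ l, ∀ j ∈ A l, ∀ k ∈ A l, ¬ G.Adj j k)
    (h : ℕ) (hh : 1 ≤ h) :
    (1 - Real.sin (Real.pi / (4 * h)) ^ 2) ^ (Finset.univ.sup fun l => (A l).card) ≤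
      (star (gVec n θ) ⬝ᵥ (OmegaAH n m θ h A *ᵥ gVec n θ)).re :=
  gVec_OmegaAH_lower_bound_general n m hm G θ hsym hθ A hind h hh

end
end

section
/- Let H be a finite-dimensional complex Hilbert space, |G⟩ ∈ H a unit vector, ν ∈ [0,1], and Ω an operator on H with |G⟩⟨G| ≤ Ω ≤ I and ‖Ω − |G⟩⟨G|‖ ≤ 1 − ν. Then for every density matrix σ on H, writing F := ⟨G|σ|G⟩, one has Tr[σΩ] ≤ F + (1−F)(1−ν) = 1 − ν(1−F); equivalently, 1 − F ≤ (1 − Tr[σΩ])/ν when ν > 0. -/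
/-!
Put `P = |G⟩⟨G|` and `Δ = Ω - P`. The hypotheses say `0 ≤ Δ ≤ 1 - P`, which forces `Δ` into the
corner `(1 - P) Δ (1 - P) = Δ`; compressing `Δ ≤ ‖Δ‖ ≤ 1 - ν` to that corner gives
`Δ ≤ (1 - ν)(1 - P)`, i.e. `Ω ≤ P + (1 - ν)(1 - P)`. Since `X ↦ Tr[σX]` is monotone for `σ ≥ 0`,
`Tr[σΩ] ≤ F + (1 - ν)(1 - F)`.
-/

open scoped BigOperators ComplexOrder
open Matrix Complex

noncomputable section

section CStarAlgebra

variable {A : Type*} [CStarAlgebra A] [PartialOrder A] [StarOrderedRing A]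

theorem IsStarProjection.le_add_smul_one_sub_of_norm_sub_le {p a : A} {c : ℝ}
    (hp : IsStarProjection p) (hpa : p ≤ a) (ha : a ≤ 1) (hc : ‖a - p‖ ≤ c) :
    a ≤ p + c • (1 - p) := by
  have hq := hp.one_sub
  have hΔ : 0 ≤ a - p := sub_nonneg.mpr hpa
  have hΔq : a - p ≤ 1 - p := sub_le_sub_right ha p
  have hΔc : a - p ≤ algebraMap ℝ A c :=
    (CStarAlgebra.norm_le_iff_le_algebraMap _ ((norm_nonneg _).trans hc) hΔ).mp hc
  have key : a - p ≤ c • (1 - p) :=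
    calc a - p = (1 - p) * (a - p) * (1 - p) := (hq.conjugate_of_nonneg_of_le hΔ hΔq).symm
      _ ≤ (1 - p) * algebraMap ℝ A c * (1 - p) := by
        simpa [hq.isSelfAdjoint.star_eq] using star_left_conjugate_le_conjugate hΔc (1 - p)
      _ = c • (1 - p) := by
        rw [Algebra.algebraMap_eq_smul_one, mul_smul_one, smul_mul_assoc, hq.isIdempotentElem.eq]
  simpa [add_comm] using add_le_add_left key p

end CStarAlgebra

namespace Matrix

variable {n 𝕜 : Type*} [Fintype n] [RCLike 𝕜]

open scoped MatrixOrder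

theorem isStarProjection_vecMulVec_star {g : n → 𝕜} (hg : star g ⬝ᵥ g = 1) :
    IsStarProjection (vecMulVec g (star g)) where
  isIdempotentElem := by rw [IsIdempotentElem, vecMulVec_mul_vecMulVec, hg, one_smul]
  isSelfAdjoint := by
    rw [IsSelfAdjoint, star_eq_conjTranspose, conjTranspose_vecMulVec, star_star]

theorem trace_mul_vecMulVec_star (σ : Matrix n n 𝕜) (g : n → 𝕜) :
    (σ * vecMulVec g (star g)).trace = star g ⬝ᵥ (σ *ᵥ g) := by
  rw [mul_vecMulVec, trace_vecMulVec, dotProduct_comm]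

theorem trace_mul_nonneg {σ A : Matrix n n 𝕜} (hσ : 0 ≤ σ) (hA : 0 ≤ A) :
    0 ≤ (σ * A).trace := by
  classical
  obtain ⟨s, rfl⟩ := CStarAlgebra.nonneg_iff_eq_star_mul_self.mp hσ
  rw [mul_assoc, trace_mul_comm]
  exact (star_right_conjugate_nonneg hA s).posSemidef.trace_nonneg

theorem trace_mul_le_trace_mul {σ A B : Matrix n n 𝕜} (hσ : 0 ≤ σ) (hAB : A ≤ B) :
    (σ * A).trace ≤ (σ * B).trace := by
  simpa [mul_sub, trace_sub] using trace_mul_nonneg hσ (sub_nonneg.mpr hAB)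

end Matrix

open scoped MatrixOrder Matrix.Norms.L2Operator in
theorem trace_test_le_of_gap_general (d : ℕ) (g : Fin d → ℂ) (hg : star g ⬝ᵥ g = 1)
    (ν : ℝ)
    (Ω : Matrix (Fin d) (Fin d) ℂ)
    (hlow : (Ω - Matrix.vecMulVec g (star g)).PosSemidef)
    (hup : ((1 : Matrix (Fin d) (Fin d) ℂ) - Ω).PosSemidef)
    (hgap : opNorm (Ω - Matrix.vecMulVec g (star g)) ≤ 1 - ν)
    (σ : Matrix (Fin d) (Fin d) ℂ) (hσ : σ.PosSemidef) (hσ1 : σ.trace = 1) :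
    ((σ * Ω).trace).re ≤ 1 - ν * (1 - (star g ⬝ᵥ (σ *ᵥ g)).re) ∧
    (0 < ν → 1 - (star g ⬝ᵥ (σ *ᵥ g)).re ≤ (1 - ((σ * Ω).trace).re) / ν) := by
  set P := vecMulVec g (star g)
  set F := star g ⬝ᵥ (σ *ᵥ g)
  -- `hlow`, `hup` are `P ≤ Ω`, `Ω ≤ 1` in the Loewner order, and `opNorm` is the L2 norm `‖·‖`.
  have hΩ : Ω ≤ P + (1 - ν) • (1 - P) :=
    (isStarProjection_vecMulVec_star hg).le_add_smul_one_sub_of_norm_sub_le hlow hup hgap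
  have htrace : (σ * (P + (1 - ν) • (1 - P))).trace = F + (1 - ν) • (1 - F) := by
    rw [mul_add, mul_smul_comm, mul_sub, mul_one, trace_add, trace_smul, trace_sub, hσ1,
      trace_mul_vecMulVec_star]
  have hbound : ((σ * Ω).trace).re ≤ 1 - ν * (1 - F.re) := by
    have := (Complex.le_def.mp (trace_mul_le_trace_mul hσ.nonneg hΩ)).1
    rw [htrace, add_re, smul_re, sub_re, one_re, smul_eq_mul] at this
    linarith
  exact ⟨hbound, fun hν => by rw [le_div_iff₀ hν]; linarith⟩

/-- Key spectral-gap-to-fidelity step (step (a) in the proof of Theorem 2 of the paper).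
On a finite-dimensional complex Hilbert space (realized as `ℂ^d`), if `|G⟩⟨G| ≤ Ω ≤ I` and
`‖Ω - |G⟩⟨G|‖ ≤ 1 - ν`, then every density matrix `σ` with fidelity `F = ⟨G|σ|G⟩`
satisfies `Tr[σΩ] ≤ F + (1-F)(1-ν) = 1 - ν(1-F)`; equivalently
`1 - F ≤ (1 - Tr[σΩ])/ν` when `ν > 0`. -/
theorem trace_test_le_of_gap (d : ℕ) (g : Fin d → ℂ) (hg : star g ⬝ᵥ g = 1)
    (ν : ℝ) (hν0 : 0 ≤ ν) (hν1 : ν ≤ 1)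
    (Ω : Matrix (Fin d) (Fin d) ℂ)
    (hlow : (Ω - Matrix.vecMulVec g (star g)).PosSemidef)
    (hup : ((1 : Matrix (Fin d) (Fin d) ℂ) - Ω).PosSemidef)
    (hgap : opNorm (Ω - Matrix.vecMulVec g (star g)) ≤ 1 - ν)
    (σ : Matrix (Fin d) (Fin d) ℂ) (hσ : σ.PosSemidef) (hσ1 : σ.trace = 1) :
    ((σ * Ω).trace).re ≤ 1 - ν * (1 - (star g ⬝ᵥ (σ *ᵥ g)).re) ∧
    (0 < ν → 1 - (star g ⬝ᵥ (σ *ᵥ g)).re ≤ (1 - ((σ * Ω).trace).re) / ν) :=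
  trace_test_le_of_gap_general d g hg ν Ω hlow hup hgap σ hσ hσ1

end
end
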